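/- arXiv:2508.05863 — 11 statements merged into one kernel-verified Lean document; each statement's English description precedes it below -/
import Mathlib

section
/- Let x be an optimal solution of the multi-period planning problem and let p', p'' be indices with 2 ≤ p' ≤ p'' ≤ P−1. If both the advanced solution x¹ and the delayed solution x² (obtained from x by shifting the block of transitions performed in periods p',…,p'' one period earlier, respectively one period later) are feasible, then x¹ and x² are both optimal. -/
open Finset

/-- Discounted total cost of a multi-period plan `x` over periods `1,…,P`. -/
noncomputable def planCost {X : Type*} (P : ℕ) (γ : ℝ) (T : X → X → ℝ) (S : X → ℝ)
    (x : ℕ → X) : ℝ :=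
  ∑ p ∈ Finset.Icc 1 P, γ ^ (p - 1) * (T (x (p - 1)) (x p) + S (x p))

/-- Feasibility of a plan: it starts at the initial state `x0`, and in every period
`p ∈ {1,…,P}` the state is feasible and the transition is allowed. -/
def planFeasible {X : Type*} (P : ℕ) (x0 : X) (XF : ℕ → Set X) (XT : ℕ → X → Set X)
    (x : ℕ → X) : Prop :=
  x 0 = x0 ∧ ∀ p, 1 ≤ p → p ≤ P → x p ∈ XF p ∧ x p ∈ XT p (x (p - 1))

/-- Optimality of a plan: it is feasible and has minimal cost among feasible plans. -/
noncomputable def planOptimal {X : Type*} (P : ℕ) (x0 : X) (XF : ℕ → Set X)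
    (XT : ℕ → X → Set X) (γ : ℝ) (T : X → X → ℝ) (S : X → ℝ) (x : ℕ → X) : Prop :=
  planFeasible P x0 XF XT x ∧
    ∀ y, planFeasible P x0 XF XT y → planCost P γ T S x ≤ planCost P γ T S y

/-- The advanced solution `x¹`: the block of transitions of periods `p',…,p''` is
performed one period earlier. -/
def advancedPlan {X : Type*} (x : ℕ → X) (p' p'' : ℕ) : ℕ → X :=
  fun p => if p' - 1 ≤ p ∧ p ≤ p'' - 1 then x (p + 1) else x p

/-- The delayed solution `x²`: the block of transitions of periods `p',…,p''` is
performed one period later. -/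
def delayedPlan {X : Type*} (x : ℕ → X) (p' p'' : ℕ) : ℕ → X :=
  fun p => if p' ≤ p ∧ p ≤ p'' then x (p - 1) else x p

private lemma sum_Ioc_shift (f : ℕ → ℝ) (a b : ℕ) :
    ∑ q ∈ Finset.Ioc (a+1) (b+1), f q = ∑ p ∈ Finset.Ioc a b, f (p+1) := by
  rw [← Finset.map_add_right_Ioc, Finset.sum_map]
  rfl

private lemma Ioc_succ_single (n : ℕ) : Finset.Ioc n (n+1) = {n+1} := by
  ext q; simp only [Finset.mem_Ioc, Finset.mem_singleton]; omega

private lemma key_ineq {X : Type*} (γ : ℝ) (hγ : 0 < γ) (T : X → X → ℝ) (S : X → ℝ)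
    (hT0 : ∀ a, T a a = 0) (hTtri : ∀ a b c, T a c ≤ T a b + T b c)
    (x : ℕ → X) (a c d : ℕ) :
    γ * planCost (a+c+3+d) γ T S (advancedPlan x (a+2) (a+2+c))
      + planCost (a+c+3+d) γ T S (delayedPlan x (a+2) (a+2+c))
      ≤ (γ + 1) * planCost (a+c+3+d) γ T S x := by
  have hIcc : Finset.Icc 1 (a+c+3+d) = Finset.Ioc 0 (a+c+3+d) := by
    ext q; simp only [Finset.mem_Icc, Finset.mem_Ioc]; omega
  -- value lemmas
  have hy1 : ∀ p, a+1 ≤ p → p ≤ a+c+1 → advancedPlan x (a+2) (a+2+c) p = x (p+1) := by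
    intro p h1 h2; simp only [advancedPlan]; rw [if_pos]; omega
  have hy1' : ∀ p, p ≤ a ∨ a+c+2 ≤ p → advancedPlan x (a+2) (a+2+c) p = x p := by
    intro p h; simp only [advancedPlan]; rw [if_neg]; omega
  have hy2 : ∀ p, a+2 ≤ p → p ≤ a+c+2 → delayedPlan x (a+2) (a+2+c) p = x (p-1) := by
    intro p h1 h2; simp only [delayedPlan]; rw [if_pos]; omega
  have hy2' : ∀ p, p ≤ a+1 ∨ a+c+3 ≤ p → delayedPlan x (a+2) (a+2+c) p = x p := by
    intro p h; simp only [delayedPlan]; rw [if_neg]; omega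
  -- cost of x
  have hcost0 : planCost (a+c+3+d) γ T S x
      = (∑ p ∈ Finset.Ioc 0 a, γ ^ (p-1) * (T (x (p-1)) (x p) + S (x p)))
        + γ ^ a * (T (x a) (x (a+1)) + S (x (a+1)))
        + (∑ p ∈ Finset.Ioc (a+1) (a+c+2), γ ^ (p-1) * (T (x (p-1)) (x p) + S (x p)))
        + γ ^ (a+c+2) * (T (x (a+c+2)) (x (a+c+3)) + S (x (a+c+3)))
        + ∑ p ∈ Finset.Ioc (a+c+3) (a+c+3+d), γ ^ (p-1) * (T (x (p-1)) (x p) + S (x p)) := by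
    simp only [planCost]
    rw [hIcc,
      ← Finset.sum_Ioc_consecutive _ (Nat.zero_le a) (show a ≤ a+c+3+d by omega),
      ← Finset.sum_Ioc_consecutive _ (show a ≤ a+1 by omega) (show a+1 ≤ a+c+3+d by omega),
      ← Finset.sum_Ioc_consecutive _ (show a+1 ≤ a+c+2 by omega) (show a+c+2 ≤ a+c+3+d by omega),
      ← Finset.sum_Ioc_consecutive _ (show a+c+2 ≤ a+c+3 by omega) (show a+c+3 ≤ a+c+3+d by omega),
      Ioc_succ_single a, Ioc_succ_single (a+c+2), Finset.sum_singleton, Finset.sum_singleton]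
    rw [show a+1-1 = a by omega, show a+c+3-1 = a+c+2 by omega, show a+c+2+1 = a+c+3 by omega]
    ring
  -- cost of advanced plan
  have e1 : (∑ p ∈ Finset.Ioc 0 a, γ ^ (p-1) * (T (advancedPlan x (a+2) (a+2+c) (p-1)) (advancedPlan x (a+2) (a+2+c) p) + S (advancedPlan x (a+2) (a+2+c) p)))
      = ∑ p ∈ Finset.Ioc 0 a, γ ^ (p-1) * (T (x (p-1)) (x p) + S (x p)) := by
    refine Finset.sum_congr rfl fun p hp => ?_
    simp only [Finset.mem_Ioc] at hp
    rw [hy1' p (Or.inl hp.2), hy1' (p-1) (Or.inl (by omega))]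
  have e2 : (∑ p ∈ Finset.Ioc (a+1) (a+c+1), γ ^ (p-1) * (T (advancedPlan x (a+2) (a+2+c) (p-1)) (advancedPlan x (a+2) (a+2+c) p) + S (advancedPlan x (a+2) (a+2+c) p)))
      = ∑ p ∈ Finset.Ioc (a+1) (a+c+1), γ ^ (p-1) * (T (x p) (x (p+1)) + S (x (p+1))) := by
    refine Finset.sum_congr rfl fun p hp => ?_
    simp only [Finset.mem_Ioc] at hp
    rw [hy1 p (by omega) (by omega),
        show advancedPlan x (a+2) (a+2+c) (p-1) = x p by
          rw [hy1 (p-1) (by omega) (by omega)]; congr 1; omega]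
  have e3 : (∑ p ∈ Finset.Ioc (a+c+3) (a+c+3+d), γ ^ (p-1) * (T (advancedPlan x (a+2) (a+2+c) (p-1)) (advancedPlan x (a+2) (a+2+c) p) + S (advancedPlan x (a+2) (a+2+c) p)))
      = ∑ p ∈ Finset.Ioc (a+c+3) (a+c+3+d), γ ^ (p-1) * (T (x (p-1)) (x p) + S (x p)) := by
    refine Finset.sum_congr rfl fun p hp => ?_
    simp only [Finset.mem_Ioc] at hp
    rw [hy1' p (Or.inr (by omega)), hy1' (p-1) (Or.inr (by omega))]
  have hcost1 : planCost (a+c+3+d) γ T S (advancedPlan x (a+2) (a+2+c))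
      = (∑ p ∈ Finset.Ioc 0 a, γ ^ (p-1) * (T (x (p-1)) (x p) + S (x p)))
        + γ ^ a * (T (x a) (x (a+2)) + S (x (a+2)))
        + (∑ p ∈ Finset.Ioc (a+1) (a+c+1), γ ^ (p-1) * (T (x p) (x (p+1)) + S (x (p+1))))
        + γ ^ (a+c+1) * (T (x (a+c+2)) (x (a+c+2)) + S (x (a+c+2)))
        + γ ^ (a+c+2) * (T (x (a+c+2)) (x (a+c+3)) + S (x (a+c+3)))
        + ∑ p ∈ Finset.Ioc (a+c+3) (a+c+3+d), γ ^ (p-1) * (T (x (p-1)) (x p) + S (x p)) := by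
    simp only [planCost]
    rw [hIcc,
      ← Finset.sum_Ioc_consecutive _ (Nat.zero_le a) (show a ≤ a+c+3+d by omega),
      ← Finset.sum_Ioc_consecutive _ (show a ≤ a+1 by omega) (show a+1 ≤ a+c+3+d by omega),
      ← Finset.sum_Ioc_consecutive _ (show a+1 ≤ a+c+1 by omega) (show a+c+1 ≤ a+c+3+d by omega),
      ← Finset.sum_Ioc_consecutive _ (show a+c+1 ≤ a+c+2 by omega) (show a+c+2 ≤ a+c+3+d by omega),
      ← Finset.sum_Ioc_consecutive _ (show a+c+2 ≤ a+c+3 by omega) (show a+c+3 ≤ a+c+3+d by omega),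
      Ioc_succ_single a, Ioc_succ_single (a+c+1), Ioc_succ_single (a+c+2),
      Finset.sum_singleton, Finset.sum_singleton, Finset.sum_singleton]
    rw [show a+1-1 = a by omega, show a+c+1+1 = a+c+2 by omega, show a+c+2-1 = a+c+1 by omega,
        show a+c+3-1 = a+c+2 by omega, show a+c+2+1 = a+c+3 by omega]
    rw [e1, e2, e3]
    rw [hy1' a (Or.inl le_rfl), hy1 (a+1) (by omega) (by omega),
        hy1' (a+c+2) (Or.inr le_rfl), hy1' (a+c+3) (Or.inr (by omega)),
        show advancedPlan x (a+2) (a+2+c) (a+c+1) = x (a+c+2) by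
          rw [hy1 (a+c+1) (by omega) (by omega)]]
    rw [show a+1+1 = a+2 by omega]
    ring
  -- cost of delayed plan
  have f1 : (∑ p ∈ Finset.Ioc 0 a, γ ^ (p-1) * (T (delayedPlan x (a+2) (a+2+c) (p-1)) (delayedPlan x (a+2) (a+2+c) p) + S (delayedPlan x (a+2) (a+2+c) p)))
      = ∑ p ∈ Finset.Ioc 0 a, γ ^ (p-1) * (T (x (p-1)) (x p) + S (x p)) := by
    refine Finset.sum_congr rfl fun p hp => ?_
    simp only [Finset.mem_Ioc] at hp
    rw [hy2' p (Or.inl (by omega)), hy2' (p-1) (Or.inl (by omega))]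
  have f2 : (∑ p ∈ Finset.Ioc (a+2) (a+c+2), γ ^ (p-1) * (T (delayedPlan x (a+2) (a+2+c) (p-1)) (delayedPlan x (a+2) (a+2+c) p) + S (delayedPlan x (a+2) (a+2+c) p)))
      = ∑ p ∈ Finset.Ioc (a+2) (a+c+2), γ ^ (p-1) * (T (x (p-2)) (x (p-1)) + S (x (p-1))) := by
    refine Finset.sum_congr rfl fun p hp => ?_
    simp only [Finset.mem_Ioc] at hp
    rw [hy2 p (by omega) (by omega),
        show delayedPlan x (a+2) (a+2+c) (p-1) = x (p-2) by
          rw [hy2 (p-1) (by omega) (by omega), show p-1-1 = p-2 from by omega]]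
  have f3 : (∑ p ∈ Finset.Ioc (a+c+3) (a+c+3+d), γ ^ (p-1) * (T (delayedPlan x (a+2) (a+2+c) (p-1)) (delayedPlan x (a+2) (a+2+c) p) + S (delayedPlan x (a+2) (a+2+c) p)))
      = ∑ p ∈ Finset.Ioc (a+c+3) (a+c+3+d), γ ^ (p-1) * (T (x (p-1)) (x p) + S (x p)) := by
    refine Finset.sum_congr rfl fun p hp => ?_
    simp only [Finset.mem_Ioc] at hp
    rw [hy2' p (Or.inr (by omega)), hy2' (p-1) (Or.inr (by omega))]
  have hcost2 : planCost (a+c+3+d) γ T S (delayedPlan x (a+2) (a+2+c))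
      = (∑ p ∈ Finset.Ioc 0 a, γ ^ (p-1) * (T (x (p-1)) (x p) + S (x p)))
        + γ ^ a * (T (x a) (x (a+1)) + S (x (a+1)))
        + γ ^ (a+1) * (T (x (a+1)) (x (a+1)) + S (x (a+1)))
        + (∑ p ∈ Finset.Ioc (a+2) (a+c+2), γ ^ (p-1) * (T (x (p-2)) (x (p-1)) + S (x (p-1))))
        + γ ^ (a+c+2) * (T (x (a+c+1)) (x (a+c+3)) + S (x (a+c+3)))
        + ∑ p ∈ Finset.Ioc (a+c+3) (a+c+3+d), γ ^ (p-1) * (T (x (p-1)) (x p) + S (x p)) := by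
    simp only [planCost]
    rw [hIcc,
      ← Finset.sum_Ioc_consecutive _ (Nat.zero_le a) (show a ≤ a+c+3+d by omega),
      ← Finset.sum_Ioc_consecutive _ (show a ≤ a+1 by omega) (show a+1 ≤ a+c+3+d by omega),
      ← Finset.sum_Ioc_consecutive _ (show a+1 ≤ a+2 by omega) (show a+2 ≤ a+c+3+d by omega),
      ← Finset.sum_Ioc_consecutive _ (show a+2 ≤ a+c+2 by omega) (show a+c+2 ≤ a+c+3+d by omega),
      ← Finset.sum_Ioc_consecutive _ (show a+c+2 ≤ a+c+3 by omega) (show a+c+3 ≤ a+c+3+d by omega),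
      Ioc_succ_single a, Ioc_succ_single (a+1), Ioc_succ_single (a+c+2),
      Finset.sum_singleton, Finset.sum_singleton, Finset.sum_singleton]
    rw [show a+1-1 = a by omega, show a+1+1 = a+2 by omega, show a+2-1 = a+1 by omega,
        show a+c+3-1 = a+c+2 by omega, show a+c+2+1 = a+c+3 by omega]
    rw [f1, f2, f3]
    rw [hy2' (a+1) (Or.inl le_rfl), hy2' a (Or.inl (by omega)),
        show delayedPlan x (a+2) (a+2+c) (a+2) = x (a+1) by
          rw [hy2 (a+2) (by omega) (by omega), show a+2-1 = a+1 from by omega],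
        show delayedPlan x (a+2) (a+2+c) (a+c+2) = x (a+c+1) by
          rw [hy2 (a+c+2) (by omega) (by omega), show a+c+2-1 = a+c+1 from by omega],
        hy2' (a+c+3) (Or.inr le_rfl)]
    ring
  -- shift identities
  have hA : γ * (∑ p ∈ Finset.Ioc (a+1) (a+c+1), γ ^ (p-1) * (T (x p) (x (p+1)) + S (x (p+1))))
      = ∑ q ∈ Finset.Ioc (a+2) (a+c+2), γ ^ (q-1) * (T (x (q-1)) (x q) + S (x q)) := by
    rw [Finset.mul_sum]
    have h := sum_Ioc_shift (fun q => γ ^ (q-1) * (T (x (q-1)) (x q) + S (x q))) (a+1) (a+c+1)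
    refine Eq.trans ?_ h.symm
    refine Finset.sum_congr rfl fun p hp => ?_
    simp only [Finset.mem_Ioc] at hp
    simp only [Nat.add_sub_cancel]
    have hpw : γ ^ p = γ * γ ^ (p-1) := by
      conv_lhs => rw [show p = p-1+1 from by omega]
      rw [pow_succ]; ring
    rw [hpw]; ring
  have hB : (∑ p ∈ Finset.Ioc (a+2) (a+c+2), γ ^ (p-1) * (T (x (p-2)) (x (p-1)) + S (x (p-1))))
      = γ * ∑ q ∈ Finset.Ioc (a+1) (a+c+1), γ ^ (q-1) * (T (x (q-1)) (x q) + S (x q)) := by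
    rw [Finset.mul_sum]
    have h := sum_Ioc_shift (fun p => γ ^ (p-1) * (T (x (p-2)) (x (p-1)) + S (x (p-1)))) (a+1) (a+c+1)
    refine Eq.trans h ?_
    refine Finset.sum_congr rfl fun q hq => ?_
    simp only [Finset.mem_Ioc] at hq
    simp only [Nat.add_sub_cancel, show ∀ n:ℕ, n+1-2 = n-1 from fun n => by omega]
    have hpw : γ ^ q = γ * γ ^ (q-1) := by
      conv_lhs => rw [show q = q-1+1 from by omega]
      rw [pow_succ]; ring
    rw [hpw]; ring
  -- splitting the middle block of x's cost, two ways
  have hW1 : (∑ p ∈ Finset.Ioc (a+1) (a+c+2), γ ^ (p-1) * (T (x (p-1)) (x p) + S (x p)))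
      = (∑ p ∈ Finset.Ioc (a+1) (a+c+1), γ ^ (p-1) * (T (x (p-1)) (x p) + S (x p)))
        + γ ^ (a+c+1) * (T (x (a+c+1)) (x (a+c+2)) + S (x (a+c+2))) := by
    rw [← Finset.sum_Ioc_consecutive _ (show a+1 ≤ a+c+1 by omega) (show a+c+1 ≤ a+c+2 by omega),
        Ioc_succ_single (a+c+1), Finset.sum_singleton,
        show a+c+1+1 = a+c+2 from by omega, show a+c+2-1 = a+c+1 from by omega]
  have hW2 : (∑ p ∈ Finset.Ioc (a+1) (a+c+2), γ ^ (p-1) * (T (x (p-1)) (x p) + S (x p)))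
      = γ ^ (a+1) * (T (x (a+1)) (x (a+2)) + S (x (a+2)))
        + ∑ p ∈ Finset.Ioc (a+2) (a+c+2), γ ^ (p-1) * (T (x (p-1)) (x p) + S (x p)) := by
    rw [← Finset.sum_Ioc_consecutive _ (show a+1 ≤ a+2 by omega) (show a+2 ≤ a+c+2 by omega),
        Ioc_succ_single (a+1), Finset.sum_singleton,
        show a+1+1 = a+2 from by omega, show a+2-1 = a+1 from by omega]
  have hW1g : γ * (∑ p ∈ Finset.Ioc (a+1) (a+c+2), γ ^ (p-1) * (T (x (p-1)) (x p) + S (x p)))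
      = γ * (∑ p ∈ Finset.Ioc (a+1) (a+c+1), γ ^ (p-1) * (T (x (p-1)) (x p) + S (x p)))
        + γ ^ (a+c+2) * (T (x (a+c+1)) (x (a+c+2)) + S (x (a+c+2))) := by
    rw [hW1]; ring
  -- endgame
  rw [hT0 (x (a+c+2))] at hcost1
  rw [hT0 (x (a+1))] at hcost2
  have h1 : γ ^ (a+1) * (T (x a) (x (a+2)) - T (x a) (x (a+1)) - T (x (a+1)) (x (a+2))) ≤ 0 :=
    mul_nonpos_of_nonneg_of_nonpos (pow_pos hγ _).le
      (by linarith [hTtri (x a) (x (a+1)) (x (a+2))])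
  have h2 : γ ^ (a+c+2) * (T (x (a+c+1)) (x (a+c+3)) - T (x (a+c+1)) (x (a+c+2))
      - T (x (a+c+2)) (x (a+c+3))) ≤ 0 :=
    mul_nonpos_of_nonneg_of_nonpos (pow_pos hγ _).le
      (by linarith [hTtri (x (a+c+1)) (x (a+c+2)) (x (a+c+3))])
  calc γ * planCost (a+c+3+d) γ T S (advancedPlan x (a+2) (a+2+c))
        + planCost (a+c+3+d) γ T S (delayedPlan x (a+2) (a+2+c))
      = (γ + 1) * planCost (a+c+3+d) γ T S x
        + γ ^ (a+1) * (T (x a) (x (a+2)) - T (x a) (x (a+1)) - T (x (a+1)) (x (a+2)))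
        + γ ^ (a+c+2) * (T (x (a+c+1)) (x (a+c+3)) - T (x (a+c+1)) (x (a+c+2))
            - T (x (a+c+2)) (x (a+c+3))) := by
        linear_combination hA + hB - hW1g - hW2 + γ * hcost1 + hcost2 - (γ + 1) * hcost0
    _ ≤ (γ + 1) * planCost (a+c+3+d) γ T S x := by linarith [h1, h2]

/-- Proposition 5 of the paper: if `x` is optimal and both the advanced solution `x¹`
and the delayed solution `x²` (for a block `p' ≤ p''` with `2 ≤ p'`, `p'' ≤ P-1`)
are feasible, then both are optimal. -/
theorem advanced_and_delayed_both_optimal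
    {X : Type*} (P : ℕ) (hP : 1 ≤ P) (x0 : X)
    (XF : ℕ → Set X) (XT : ℕ → X → Set X)
    (γ : ℝ) (hγ : 0 < γ) (T : X → X → ℝ) (S : X → ℝ)
    (hT0 : ∀ a, T a a = 0)
    (hTtri : ∀ a b c, T a c ≤ T a b + T b c)
    (x : ℕ → X) (hx : planOptimal P x0 XF XT γ T S x)
    (p' p'' : ℕ) (hp' : 2 ≤ p') (hp'p'' : p' ≤ p'') (hp'' : p'' ≤ P - 1)
    (hfeas1 : planFeasible P x0 XF XT (advancedPlan x p' p''))
    (hfeas2 : planFeasible P x0 XF XT (delayedPlan x p' p'')) :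
    planOptimal P x0 XF XT γ T S (advancedPlan x p' p'') ∧
      planOptimal P x0 XF XT γ T S (delayedPlan x p' p'') := by
  obtain ⟨hxf, hxopt⟩ := hx
  obtain ⟨a, rfl⟩ : ∃ a, p' = a + 2 := ⟨p' - 2, by omega⟩
  obtain ⟨c, rfl⟩ : ∃ c, p'' = a + 2 + c := ⟨p'' - (a + 2), by omega⟩
  obtain ⟨d, rfl⟩ : ∃ d, P = a + c + 3 + d := ⟨P - (a + c + 3), by omega⟩
  have hkey := key_ineq γ hγ T S hT0 hTtri x a c d
  have h1 := hxopt _ hfeas1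
  have h2 := hxopt _ hfeas2
  have hm : γ * planCost (a+c+3+d) γ T S x
      ≤ γ * planCost (a+c+3+d) γ T S (advancedPlan x (a+2) (a+2+c)) :=
    mul_le_mul_of_nonneg_left h1 hγ.le
  have hdel : planCost (a+c+3+d) γ T S (delayedPlan x (a+2) (a+2+c))
      ≤ planCost (a+c+3+d) γ T S x := by linarith
  have hadv : planCost (a+c+3+d) γ T S (advancedPlan x (a+2) (a+2+c))
      ≤ planCost (a+c+3+d) γ T S x := by
    have hm2 : γ * planCost (a+c+3+d) γ T S (advancedPlan x (a+2) (a+2+c))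
        ≤ γ * planCost (a+c+3+d) γ T S x := by linarith
    exact le_of_mul_le_mul_left hm2 hγ
  exact ⟨⟨hfeas1, fun y hy => hadv.trans (hxopt y hy)⟩,
         ⟨hfeas2, fun y hy => hdel.trans (hxopt y hy)⟩⟩
end

section
/- For every solution x = (x_0, x_1, …, x_P) (feasible or not) of the multi-period planning problem and all indices 2 ≤ p' ≤ p'' ≤ P−1, the advanced solution x¹ and the delayed solution x² satisfy the inequality γ·(V(x¹) − V(x)) + (V(x²) − V(x)) ≤ 0; that is, the discounted cost change of advancing the block of transitions of periods p',…,p'' by one period, weighted by γ, plus the cost change of delaying the same block by one period, is nonpositive. -/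
open Finset

noncomputable def pcost {X : Type*} (γ : ℝ) (T : X → X → ℝ) (S : X → ℝ) (x : ℕ → X) (p : ℕ) : ℝ :=
  T (x (p-1)) (x p) + S (x p)

lemma adv_in {X : Type*} (x : ℕ → X) {p' p'' p : ℕ} (h1 : p' - 1 ≤ p) (h2 : p ≤ p'' - 1) :
    advancedPlan x p' p'' p = x (p + 1) := if_pos ⟨h1, h2⟩

lemma adv_out {X : Type*} (x : ℕ → X) {p' p'' p : ℕ} (h : ¬(p' - 1 ≤ p ∧ p ≤ p'' - 1)) :
    advancedPlan x p' p'' p = x p := if_neg h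

lemma del_in {X : Type*} (x : ℕ → X) {p' p'' p : ℕ} (h1 : p' ≤ p) (h2 : p ≤ p'') :
    delayedPlan x p' p'' p = x (p - 1) := if_pos ⟨h1, h2⟩

lemma del_out {X : Type*} (x : ℕ → X) {p' p'' p : ℕ} (h : ¬(p' ≤ p ∧ p ≤ p'')) :
    delayedPlan x p' p'' p = x p := if_neg h

lemma key_term {X : Type*} (γ : ℝ) (hγ : 0 < γ) (T : X → X → ℝ) (S : X → ℝ)
    (hT0 : ∀ a, T a a = 0) (hTtri : ∀ a b c, T a c ≤ T a b + T b c)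
    (x : ℕ → X) (p' p'' p : ℕ) (hp' : 2 ≤ p') (hpp : p' ≤ p'')
    (h1 : p' - 1 ≤ p) (h2 : p ≤ p'') :
    γ * γ ^ (p - 1) * (pcost γ T S (advancedPlan x p' p'') p - pcost γ T S x p)
      + γ ^ (p + 1 - 1) * (pcost γ T S (delayedPlan x p' p'') (p + 1) - pcost γ T S x (p + 1)) ≤ 0 := by
  have hp1 : 1 ≤ p := by omega
  have hγp : γ * γ ^ (p - 1) = γ ^ p := by
    rw [mul_comm, ← pow_succ, Nat.sub_add_cancel hp1]
  have hpow : (0:ℝ) < γ ^ p := pow_pos hγ p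
  simp only [Nat.add_sub_cancel, hγp, pcost]
  rcases show p = p' - 1 ∨ (p' ≤ p ∧ p ≤ p'' - 1) ∨ p = p'' by omega with h | ⟨ha, hb⟩ | h
  · subst h
    have e1 : p' - 1 + 1 = p' := by omega
    rw [adv_out x (by omega : ¬(p' - 1 ≤ p' - 1 - 1 ∧ p' - 1 - 1 ≤ p'' - 1)),
        adv_in x (le_refl _) (by omega), e1,
        del_out x (by omega : ¬(p' ≤ p' - 1 ∧ p' - 1 ≤ p'')),
        del_in x (le_refl p') hpp]
    have ht := hTtri (x (p' - 1 - 1)) (x (p' - 1)) (x p')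
    have h0 := hT0 (x (p' - 1))
    nlinarith [hpow]
  · rw [adv_in x (by omega : p' - 1 ≤ p - 1) (by omega), Nat.sub_add_cancel hp1,
        adv_in x (by omega) hb,
        del_in x ha h2, del_in x (by omega : p' ≤ p + 1) (by omega : p + 1 ≤ p''),
        Nat.add_sub_cancel]
    nlinarith [hpow]
  · subst h
    have e1 : p - 1 + 1 = p := by omega
    rw [adv_in x (by omega : p' - 1 ≤ p - 1) (le_refl _), e1,
        adv_out x (by omega : ¬(p' - 1 ≤ p ∧ p ≤ p - 1)),
        del_in x (by omega : p' ≤ p) (le_refl p),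
        del_out x (by omega : ¬(p' ≤ p + 1 ∧ p + 1 ≤ p))]
    have ht := hTtri (x (p - 1)) (x p) (x (p + 1))
    have h0 := hT0 (x p)
    nlinarith [hpow]

/-- Key inequality behind Proposition 5: for any solution `x` (feasible or not),
`γ·(V(x¹) − V(x)) + (V(x²) − V(x)) ≤ 0`, where `x¹` advances and `x²` delays the block
of transitions of periods `p',…,p''` by one period. -/
theorem advanced_delayed_cost_inequality
    {X : Type*} (P : ℕ) (hP : 1 ≤ P) (x0 : X)
    (γ : ℝ) (hγ : 0 < γ) (T : X → X → ℝ) (S : X → ℝ)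
    (hT0 : ∀ a, T a a = 0)
    (hTtri : ∀ a b c, T a c ≤ T a b + T b c)
    (x : ℕ → X) (hx0 : x 0 = x0)
    (p' p'' : ℕ) (hp' : 2 ≤ p') (hp'p'' : p' ≤ p'') (hp'' : p'' ≤ P - 1) :
    γ * (planCost P γ T S (advancedPlan x p' p'') - planCost P γ T S x) +
        (planCost P γ T S (delayedPlan x p' p'') - planCost P γ T S x) ≤ 0 := by
  have hplan : ∀ y : ℕ → X, planCost P γ T S y = ∑ p ∈ Icc 1 P, γ ^ (p-1) * pcost γ T S y p :=
    fun y => rfl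
  rw [hplan, hplan, hplan]
  have hA : γ * ((∑ p ∈ Icc 1 P, γ ^ (p-1) * pcost γ T S (advancedPlan x p' p'') p) -
        ∑ p ∈ Icc 1 P, γ ^ (p-1) * pcost γ T S x p) +
      ((∑ p ∈ Icc 1 P, γ ^ (p-1) * pcost γ T S (delayedPlan x p' p'') p) -
        ∑ p ∈ Icc 1 P, γ ^ (p-1) * pcost γ T S x p)
      = (∑ p ∈ Icc 1 P, γ * γ ^ (p-1) * (pcost γ T S (advancedPlan x p' p'') p - pcost γ T S x p))
        + ∑ p ∈ Icc 1 P, γ ^ (p-1) * (pcost γ T S (delayedPlan x p' p'') p - pcost γ T S x p) := by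
    rw [← Finset.sum_sub_distrib, ← Finset.sum_sub_distrib, Finset.mul_sum]
    congr 1 <;> exact Finset.sum_congr rfl fun p _ => by ring
  rw [hA]
  have hB : ∑ p ∈ Icc 1 P, γ * γ ^ (p-1) * (pcost γ T S (advancedPlan x p' p'') p - pcost γ T S x p)
      = ∑ p ∈ Icc (p'-1) p'', γ * γ ^ (p-1) * (pcost γ T S (advancedPlan x p' p'') p - pcost γ T S x p) := by
    symm
    apply Finset.sum_subset
    · intro q hq
      simp only [Finset.mem_Icc] at *
      omega
    · intro q hq hnq
      simp only [Finset.mem_Icc] at hq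
      simp only [Finset.mem_Icc] at hnq
      have e1 : advancedPlan x p' p'' q = x q := adv_out x (by omega)
      have e2 : advancedPlan x p' p'' (q-1) = x (q-1) := adv_out x (by omega)
      simp [pcost, e1, e2]
  have hC : ∑ p ∈ Icc 1 P, γ ^ (p-1) * (pcost γ T S (delayedPlan x p' p'') p - pcost γ T S x p)
      = ∑ p ∈ Icc p' (p''+1), γ ^ (p-1) * (pcost γ T S (delayedPlan x p' p'') p - pcost γ T S x p) := by
    symm
    apply Finset.sum_subset
    · intro q hq
      simp only [Finset.mem_Icc] at *
      omega
    · intro q hq hnq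
      simp only [Finset.mem_Icc] at hq
      simp only [Finset.mem_Icc] at hnq
      have e1 : delayedPlan x p' p'' q = x q := del_out x (by omega)
      have e2 : delayedPlan x p' p'' (q-1) = x (q-1) := del_out x (by omega)
      simp [pcost, e1, e2]
  rw [hB, hC]
  have hmap : Icc p' (p''+1) = Finset.map (addRightEmbedding 1) (Icc (p'-1) p'') := by
    rw [Finset.map_add_right_Icc]
    congr 1
    omega
  rw [hmap, Finset.sum_map]
  simp only [addRightEmbedding_apply]
  rw [← Finset.sum_add_distrib]
  apply Finset.sum_nonpos
  intro p hp
  simp only [Finset.mem_Icc] at hp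
  exact key_term γ hγ T S hT0 hTtri x p' p'' p hp' hp'p'' hp.1 hp.2
end

section
/- For every solution x = (x_0, x_1, …, x_P) of the multi-period planning problem and every index p with 1 ≤ p ≤ P−1, the solution x² obtained from x by replacing x_p with x_{p−1} (delaying the period-p transition by one period) satisfies V(x²) − V(x) ≤ γ^{p−1} · [ (S(x_{p−1}) − S(x_p)) − (1−γ)·T(x_{p−1}, x_p) ]. In particular, if x is optimal and x² is feasible, then (1−γ)·T(x_{p−1}, x_p) ≤ S(x_{p−1}) − S(x_p). -/
open Finset

/-- Delaying a single transition: for any solution `x` and `1 ≤ p ≤ P−1`, the solution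
`x²` obtained by replacing `x_p` with `x_{p−1}` satisfies
`V(x²) − V(x) ≤ γ^{p−1}·[(S(x_{p−1}) − S(x_p)) − (1−γ)·T(x_{p−1},x_p)]`; in particular,
if `x` is optimal and `x²` is feasible, then `(1−γ)·T(x_{p−1},x_p) ≤ S(x_{p−1}) − S(x_p)`. -/
theorem delay_single_transition
    {X : Type*} (P : ℕ) (hP : 1 ≤ P) (x0 : X)
    (XF : ℕ → Set X) (XT : ℕ → X → Set X)
    (γ : ℝ) (hγ : 0 < γ) (T : X → X → ℝ) (S : X → ℝ)
    (hT0 : ∀ a, T a a = 0)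
    (hTtri : ∀ a b c, T a c ≤ T a b + T b c)
    (x : ℕ → X) (hx0 : x 0 = x0)
    (p : ℕ) (hp1 : 1 ≤ p) (hpP : p ≤ P - 1) :
    (planCost P γ T S (fun q => if q = p then x (p - 1) else x q) - planCost P γ T S x ≤
        γ ^ (p - 1) * ((S (x (p - 1)) - S (x p)) - (1 - γ) * T (x (p - 1)) (x p))) ∧
      (planOptimal P x0 XF XT γ T S x →
        planFeasible P x0 XF XT (fun q => if q = p then x (p - 1) else x q) →
        (1 - γ) * T (x (p - 1)) (x p) ≤ S (x (p - 1)) - S (x p)) := by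

  have hpP' : p + 1 ≤ P := by omega
  set y : ℕ → X := (fun q => if q = p then x (p - 1) else x q) with hy
  have key : planCost P γ T S y - planCost P γ T S x ≤
      γ ^ (p - 1) * ((S (x (p - 1)) - S (x p)) - (1 - γ) * T (x (p - 1)) (x p)) := by
    have hdiff : planCost P γ T S y - planCost P γ T S x =
        ∑ q ∈ Finset.Icc 1 P,
          (γ ^ (q - 1) * (T (y (q - 1)) (y q) + S (y q))
            - γ ^ (q - 1) * (T (x (q - 1)) (x q) + S (x q))) := by
      rw [planCost, planCost, ← Finset.sum_sub_distrib]
    rw [hdiff]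
    have hsub : ({p, p + 1} : Finset ℕ) ⊆ Finset.Icc 1 P := by
      intro k hk
      simp only [Finset.mem_insert, Finset.mem_singleton] at hk
      rcases hk with rfl | rfl <;> simp [Finset.mem_Icc] <;> omega
    rw [← Finset.sum_subset hsub (fun k hk hk' => by
      simp only [Finset.mem_insert, Finset.mem_singleton, not_or] at hk'
      obtain ⟨hk1, hk2⟩ := hk'
      have h1 : y k = x k := by simp [hy, hk1]
      have h2 : y (k - 1) = x (k - 1) := by
        have hkk := Finset.mem_Icc.mp hk
        have : k - 1 ≠ p := by omega
        simp [hy, this]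
      rw [h1, h2]; ring)]
    rw [Finset.sum_pair (by omega : p ≠ p + 1)]
    have e1 : y p = x (p - 1) := by simp [hy]
    have e2 : y (p - 1) = x (p - 1) := by
      have : p - 1 ≠ p := by omega
      simp [hy, this]
    have e3 : y (p + 1) = x (p + 1) := by
      have : p + 1 ≠ p := by omega
      simp [hy, this]
    have e4 : y (p + 1 - 1) = x (p - 1) := by simp [hy]
    rw [e1, e2, e3, e4, hT0]
    have hpow : γ ^ (p + 1 - 1) = γ ^ (p - 1) * γ := by
      have : p + 1 - 1 = (p - 1) + 1 := by omega
      rw [this, pow_succ]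
    rw [hpow]
    simp only [Nat.add_sub_cancel]
    have hγk : (0:ℝ) ≤ γ ^ (p - 1) * γ :=
      mul_nonneg (pow_nonneg hγ.le _) hγ.le
    have htri := hTtri (x (p - 1)) (x p) (x (p + 1))
    nlinarith [mul_le_mul_of_nonneg_left htri hγk]
  refine ⟨key, fun hopt hfeas => ?_⟩
  have hle := hopt.2 y hfeas
  have h0 : (0:ℝ) ≤ γ ^ (p - 1) *
      ((S (x (p - 1)) - S (x p)) - (1 - γ) * T (x (p - 1)) (x p)) := by linarith
  have hγp : (0:ℝ) < γ ^ (p - 1) := pow_pos hγ _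
  nlinarith [h0, hγp]
end

section
/- For every solution x = (x_0, x_1, …, x_P) of the multi-period planning problem and every index q with 2 ≤ q ≤ P, the solution x¹ obtained from x by replacing x_{q−1} with x_q (advancing the period-q transition by one period) satisfies V(x¹) − V(x) ≤ γ^{q−2} · [ (1−γ)·T(x_{q−1}, x_q) + S(x_q) − S(x_{q−1}) ]. In particular, if x is optimal and x¹ is feasible, then (1−γ)·T(x_{q−1}, x_q) ≥ S(x_{q−1}) − S(x_q). -/
open Finset

/-- Advancing a single transition: for any solution `x` and `2 ≤ q ≤ P`, the solution
`x¹` obtained by replacing `x_{q−1}` with `x_q` satisfies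
`V(x¹) − V(x) ≤ γ^{q−2}·[(1−γ)·T(x_{q−1},x_q) + S(x_q) − S(x_{q−1})]`; in particular,
if `x` is optimal and `x¹` is feasible, then `(1−γ)·T(x_{q−1},x_q) ≥ S(x_{q−1}) − S(x_q)`. -/
theorem advance_single_transition
    {X : Type*} (P : ℕ) (hP : 1 ≤ P) (x0 : X)
    (XF : ℕ → Set X) (XT : ℕ → X → Set X)
    (γ : ℝ) (hγ : 0 < γ) (T : X → X → ℝ) (S : X → ℝ)
    (hT0 : ∀ a, T a a = 0)
    (hTtri : ∀ a b c, T a c ≤ T a b + T b c)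
    (x : ℕ → X) (hx0 : x 0 = x0)
    (q : ℕ) (hq2 : 2 ≤ q) (hqP : q ≤ P) :
    (planCost P γ T S (fun p => if p = q - 1 then x q else x p) - planCost P γ T S x ≤
        γ ^ (q - 2) * ((1 - γ) * T (x (q - 1)) (x q) + S (x q) - S (x (q - 1)))) ∧
      (planOptimal P x0 XF XT γ T S x →
        planFeasible P x0 XF XT (fun p => if p = q - 1 then x q else x p) →
        S (x (q - 1)) - S (x q) ≤ (1 - γ) * T (x (q - 1)) (x q)) := by
  set y : ℕ → X := fun p => if p = q - 1 then x q else x p with hy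
  set f : ℕ → ℝ := fun p =>
    γ ^ (p - 1) * (T (y (p - 1)) (y p) + S (y p)) -
      γ ^ (p - 1) * (T (x (p - 1)) (x p) + S (x p)) with hf
  have hq1 : 1 ≤ q - 1 := by omega
  have hqne : q - 1 ≠ q := by omega
  have hdiff : planCost P γ T S y - planCost P γ T S x = ∑ p ∈ Finset.Icc 1 P, f p := by
    unfold planCost
    rw [← Finset.sum_sub_distrib]
  have hsub : ({q - 1, q} : Finset ℕ) ⊆ Finset.Icc 1 P := by
    intro p hp
    simp only [Finset.mem_insert, Finset.mem_singleton] at hp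
    simp only [Finset.mem_Icc]
    omega
  have hzero : ∀ p ∈ Finset.Icc 1 P, p ∉ ({q - 1, q} : Finset ℕ) → f p = 0 := by
    intro p hp hpn
    simp only [Finset.mem_insert, Finset.mem_singleton, not_or] at hpn
    simp only [Finset.mem_Icc] at hp
    have h1 : y p = x p := by simp [hy, hpn.1]
    have h2 : y (p - 1) = x (p - 1) := by
      simp only [hy]
      rw [if_neg]
      omega
    simp [hf, h1, h2]
  have hsum : ∑ p ∈ Finset.Icc 1 P, f p = f (q - 1) + f q :=
    (Finset.sum_subset hsub hzero).symm.trans (Finset.sum_pair hqne)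
  have hyq1 : y (q - 1) = x q := by simp [hy]
  have hyq2 : y (q - 1 - 1) = x (q - 2) := by
    simp only [hy]
    rw [if_neg (by omega)]
    congr 1
  have hyq : y q = x q := by simp [hy, hqne.symm]
  have hfq1 : f (q - 1) =
      γ ^ (q - 2) * (T (x (q - 2)) (x q) + S (x q)) -
        γ ^ (q - 2) * (T (x (q - 2)) (x (q - 1)) + S (x (q - 1))) := by
    simp only [hf, hyq1, hyq2]
    have : q - 1 - 1 = q - 2 := by omega
    rw [this]
  have hfq : f q = -(γ ^ (q - 1) * T (x (q - 1)) (x q)) := by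
    simp only [hf, hyq, hyq1, hT0]
    ring
  have hpow : (0:ℝ) < γ ^ (q - 2) := pow_pos hγ _
  have hpows : γ ^ (q - 1) = γ ^ (q - 2) * γ := by
    rw [← pow_succ]
    congr 1
    omega
  have htri := hTtri (x (q - 2)) (x (q - 1)) (x q)
  have hmain : planCost P γ T S y - planCost P γ T S x ≤
      γ ^ (q - 2) * ((1 - γ) * T (x (q - 1)) (x q) + S (x q) - S (x (q - 1))) := by
    rw [hdiff, hsum, hfq1, hfq, hpows]
    nlinarith [hpow.le, htri]
  refine ⟨hmain, fun hopt hfeas => ?_⟩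
  have h0 : planCost P γ T S x ≤ planCost P γ T S y := hopt.2 y hfeas
  nlinarith [hmain, hpow, h0]
end

section
/- The two-stage problem equals its logic-based Benders master reformulation: inf { ∑_{p=1}^{P} f_pᵀ x_p + ∑_{p=1}^{P} γ^{p−1} Q_p(x_p) : x ∈ 𝒳 } = inf { ∑_{p=1}^{P} f_pᵀ x_p + ∑_{p=1}^{P} γ^{p−1} Θ_p : x ∈ 𝒳, Θ ∈ ℝ^P with Θ_p ≥ 0 for all p, and for every p ∈ {1,…,P}: Θ_p ≥ Q_p(x'_p)·1[x_p ≤ x'_p] for all x'_p ∈ S(Q_p), and ¬(x_p ≤ x'_p) for all x'_p ∈ 𝒳_p ∖ S(Q_p) }, where both infima are taken in the extended reals and 1[C] is 1 if the clause C holds and 0 otherwise. -/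
/-!
Every cut family is evaluated at `x'_p = x_p` itself: the feasibility cut there forbids
`Q_p(x_p) = ∞` and the optimality cut gives `Θ_p ≥ Q_p(x_p)`, so each master point costs at
least the original objective of its `x`. Conversely, if all `Q_p(x_p)` are finite then
`Θ_p := Q_p(x_p)` satisfies every cut because `Q_p` is nonincreasing, and if some `Q_p(x_p)`
is infinite then the original objective of `x` is `+∞` since `γ^{p−1} > 0`.
-/

open Finset
open scoped ENNReal Classical

/-- Objective value, in the extended reals, of a strategic solution `x` with
period-`p` second-stage values `G p` (in `[0,+∞]`): `∑_p f_pᵀ x_p + ∑_p γ^{p−1} G_p`.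
Periods `p ∈ {1,…,P}` are indexed by `Fin P`, so `γ^{p−1}` is `γ ^ p.val`. -/
noncomputable def twoStageObj {n P : ℕ} (γ : ℝ) (f : Fin P → Fin n → ℝ)
    (x : Fin P → Fin n → ℤ) (G : Fin P → ℝ≥0∞) : EReal :=
  ((∑ p, ∑ i, f p i * (x p i : ℝ) : ℝ) : EReal) +
    ((∑ p, ENNReal.ofReal (γ ^ p.val) * G p : ℝ≥0∞) : EReal)

section Cuts

variable {α : Type*} [Preorder α] {S : Set α} {q : α → ℝ≥0∞} {y : α}

def OptimalityCuts (S : Set α) (q : α → ℝ≥0∞) (y : α) (θ : ℝ) : Prop :=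
  ∀ a ∈ S, q a < ⊤ → (if y ≤ a then q a else 0) ≤ ENNReal.ofReal θ

def FeasibilityCuts (S : Set α) (q : α → ℝ≥0∞) (y : α) : Prop :=
  ∀ a ∈ S, ¬ q a < ⊤ → ¬ y ≤ a

theorem OptimalityCuts.le_ofReal {θ : ℝ} (hopt : OptimalityCuts S q y θ)
    (hfeas : FeasibilityCuts S q y) (hy : y ∈ S) : q y ≤ ENNReal.ofReal θ := by
  have hfin : q y < ⊤ := by_contra fun h => hfeas y hy h le_rfl
  simpa using hopt y hy hfin

theorem optimalityCuts_toReal_of_antitoneOn (hq : AntitoneOn q S) (hy : y ∈ S)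
    (hfin : q y ≠ ⊤) : OptimalityCuts S q y (q y).toReal := by
  intro a ha _
  rw [ENNReal.ofReal_toReal hfin]
  split_ifs with hya
  · exact hq hy ha hya
  · exact zero_le

theorem feasibilityCuts_of_antitoneOn (hq : AntitoneOn q S) (hy : y ∈ S) (hfin : q y ≠ ⊤) :
    FeasibilityCuts S q y :=
  fun _ ha hinf hya => hinf ((hq hy ha hya).trans_lt hfin.lt_top)

end Cuts

section Objective

variable {n P : ℕ} {γ : ℝ} {f : Fin P → Fin n → ℝ} {x : Fin P → Fin n → ℤ}
  {G G' : Fin P → ℝ≥0∞}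

theorem twoStageObj_mono (h : ∀ p, G p ≤ G' p) :
    twoStageObj γ f x G ≤ twoStageObj γ f x G' := by
  unfold twoStageObj
  gcongr 1
  exact EReal.coe_ennreal_le_coe_ennreal_iff.2 (by gcongr with p; exact h p)

theorem twoStageObj_eq_top_of_eq_top (hγ : 0 < γ) {p : Fin P} (hp : G p = ⊤) :
    twoStageObj γ f x G = ⊤ := by
  have hweight : ENNReal.ofReal (γ ^ p.val) ≠ 0 := by
    simpa using pow_pos hγ p.val
  have hsum : ∑ p, ENNReal.ofReal (γ ^ p.val) * G p = ⊤ :=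
    ENNReal.sum_eq_top.2 ⟨p, mem_univ p, by rw [hp, ENNReal.mul_top hweight]⟩
  rw [twoStageObj, hsum, EReal.coe_ennreal_top, EReal.add_top_of_ne_bot (EReal.coe_ne_bot _)]

end Objective

/-- The logic-based Benders master reformulation: the two-stage problem
`inf { ∑_p f_pᵀ x_p + ∑_p γ^{p−1} Q_p(x_p) : x ∈ 𝒳 }` equals the master problem in
which each `Q_p` is replaced by a variable `Θ_p ≥ 0` constrained by all monotone
optimality cuts `Θ_p ≥ Q_p(x'_p)·1[x_p ≤ x'_p]` for `x'_p` in the support `S(Q_p)`,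
and by all feasibility cuts `¬(x_p ≤ x'_p)` for `x'_p ∈ 𝒳_p ∖ S(Q_p)`; both infima
are taken in the extended reals. -/
theorem lbbd_master_reformulation {n P : ℕ} (γ : ℝ) (hγ : 0 < γ)
    (f : Fin P → Fin n → ℝ)
    (𝒳 : Set (Fin P → Fin n → ℤ))
    (Q : Fin P → (Fin n → ℤ) → ℝ≥0∞)
    (hQ : ∀ p : Fin P, ∀ a ∈ (fun x => x p) '' 𝒳, ∀ b ∈ (fun x => x p) '' 𝒳,
      a ≤ b → Q p b ≤ Q p a) :
    sInf {v : EReal | ∃ x ∈ 𝒳,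
        v = twoStageObj γ f x (fun p => Q p (x p))} =
      sInf {v : EReal | ∃ x ∈ 𝒳, ∃ Θ : Fin P → ℝ,
        (∀ p, 0 ≤ Θ p) ∧
        (∀ p : Fin P, ∀ a ∈ (fun x => x p) '' 𝒳, Q p a < ⊤ →
          (if x p ≤ a then Q p a else 0) ≤ ENNReal.ofReal (Θ p)) ∧
        (∀ p : Fin P, ∀ a ∈ (fun x => x p) '' 𝒳, ¬ Q p a < ⊤ → ¬ x p ≤ a) ∧
        v = twoStageObj γ f x (fun p => ENNReal.ofReal (Θ p))} := by
  apply le_antisymm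
  · refine le_sInf ?_
    rintro _ ⟨x, hx, Θ, -, hopt, hfeas, rfl⟩
    have hQΘ (p : Fin P) : Q p (x p) ≤ ENNReal.ofReal (Θ p) :=
      OptimalityCuts.le_ofReal (hopt p) (hfeas p) (Set.mem_image_of_mem _ hx)
    exact le_trans (sInf_le ⟨x, hx, rfl⟩) (twoStageObj_mono hQΘ)
  · refine le_sInf ?_
    rintro _ ⟨x, hx, rfl⟩
    by_cases hinf : ∃ p, Q p (x p) = ⊤
    · obtain ⟨p, hp⟩ := hinf
      rw [twoStageObj_eq_top_of_eq_top hγ hp]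
      exact le_top
    push Not at hinf
    have hproj (p : Fin P) : x p ∈ (fun x => x p) '' 𝒳 := Set.mem_image_of_mem _ hx
    refine sInf_le ⟨x, hx, fun p => (Q p (x p)).toReal, fun p => ENNReal.toReal_nonneg,
      fun p => optimalityCuts_toReal_of_antitoneOn (hQ p) (hproj p) (hinf p),
      fun p => feasibilityCuts_of_antitoneOn (hQ p) (hproj p) (hinf p), ?_⟩
    simp only [ENNReal.ofReal_toReal (hinf _)]
end

section
/- Equivalence of the closest-cut and the Conforti–Wolsey deepest-cut Benders selection problems (Proposition 4): for every (π*, π₀*) ∈ Π with g(π*, π₀*) > 0, the point (π*, π₀*) minimizes the ratio β(π, π₀) := ( −πᵀ(b − B x°) + π₀ θ° ) / g(π, π₀) over { (π, π₀) ∈ Π : g(π, π₀) > 0 } if and only if the rescaled point (π*, π₀*) / g(π*, π₀*) maximizes f over { (π, π₀) ∈ Π : g(π, π₀) = 1 }. The proof rests on the identity f(π, π₀) + ( −πᵀ(b − B x°) + π₀ θ° ) = g(π, π₀), valid for all (π, π₀) ∈ ℝ^m × ℝ, so that 1 − β = f/g whenever g ≠ 0. -/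
open Finset Matrix

/-- The Benders dual cone `Π = { (π, π₀) : π ≥ 0, π₀ ≥ 0, Aᵀπ − π₀ c ≤ 0 }`. -/
def bendersDualCone {m n : ℕ} (A : Matrix (Fin m) (Fin n) ℝ) (c : Fin n → ℝ) :
    Set ((Fin m → ℝ) × ℝ) :=
  {p | (∀ i, 0 ≤ p.1 i) ∧ 0 ≤ p.2 ∧ ∀ i, (∑ j, A j i * p.1 j) - p.2 * c i ≤ 0}

/-- The cut-violation functional `f(π,π₀) = πᵀ(b − B x') − π₀ θ'`. -/
def bendersF {m d : ℕ} (b : Fin m → ℝ) (B : Matrix (Fin m) (Fin d) ℝ)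
    (x' : Fin d → ℝ) (θ' : ℝ) (p : (Fin m → ℝ) × ℝ) : ℝ :=
  p.1 ⬝ᵥ (b - B *ᵥ x') - p.2 * θ'

/-- The normalization functional `g(π,π₀) = πᵀ B (x° − x') + π₀ (θ° − θ')`. -/
def bendersG {m d : ℕ} (B : Matrix (Fin m) (Fin d) ℝ)
    (x' xo : Fin d → ℝ) (θ' θo : ℝ) (p : (Fin m → ℝ) × ℝ) : ℝ :=
  p.1 ⬝ᵥ (B *ᵥ (xo - x')) + p.2 * (θo - θ')

/-- The closest-cut objective `β(π,π₀) = (−πᵀ(b − B x°) + π₀ θ°) / g(π,π₀)`. -/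
noncomputable def bendersBeta {m d : ℕ} (b : Fin m → ℝ)
    (B : Matrix (Fin m) (Fin d) ℝ) (x' xo : Fin d → ℝ) (θ' θo : ℝ)
    (p : (Fin m → ℝ) × ℝ) : ℝ :=
  (-(p.1 ⬝ᵥ (b - B *ᵥ xo)) + p.2 * θo) / bendersG B x' xo θ' θo p

lemma smul_mem_cone {m n : ℕ} (A : Matrix (Fin m) (Fin n) ℝ) (c : Fin n → ℝ)
    {t : ℝ} (ht : 0 ≤ t) {p : (Fin m → ℝ) × ℝ} (hp : p ∈ bendersDualCone A c) :
    t • p ∈ bendersDualCone A c := by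
  obtain ⟨h1, h2, h3⟩ := hp
  refine ⟨fun i => mul_nonneg ht (h1 i), mul_nonneg ht h2, fun i => ?_⟩
  have : (∑ j, A j i * (t • p).1 j) - (t • p).2 * c i
      = t * ((∑ j, A j i * p.1 j) - p.2 * c i) := by
    simp [Prod.smul_fst, Prod.smul_snd, smul_eq_mul, mul_sub, Finset.mul_sum]
    ring_nf
    congr 1
    exact Finset.sum_congr rfl fun j _ => by ring
  rw [this]
  exact mul_nonpos_of_nonneg_of_nonpos ht (h3 i)

lemma bendersF_smul {m d : ℕ} (b : Fin m → ℝ) (B : Matrix (Fin m) (Fin d) ℝ)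
    (x' : Fin d → ℝ) (θ' : ℝ) (t : ℝ) (p : (Fin m → ℝ) × ℝ) :
    bendersF b B x' θ' (t • p) = t * bendersF b B x' θ' p := by
  simp [bendersF, dotProduct, Finset.mul_sum, mul_sub]
  ring_nf

lemma bendersG_smul {m d : ℕ} (B : Matrix (Fin m) (Fin d) ℝ)
    (x' xo : Fin d → ℝ) (θ' θo : ℝ) (t : ℝ) (p : (Fin m → ℝ) × ℝ) :
    bendersG B x' xo θ' θo (t • p) = t * bendersG B x' xo θ' θo p := by
  simp [bendersG, dotProduct, Finset.mul_sum, mul_add]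
  ring_nf

lemma bendersBeta_eq {m d : ℕ} (b : Fin m → ℝ) (B : Matrix (Fin m) (Fin d) ℝ)
    (x' xo : Fin d → ℝ) (θ' θo : ℝ) (p : (Fin m → ℝ) × ℝ)
    (hg : bendersG B x' xo θ' θo p ≠ 0) :
    bendersBeta b B x' xo θ' θo p = 1 - bendersF b B x' θ' p / bendersG B x' xo θ' θo p := by
  have key : bendersF b B x' θ' p + (-(p.1 ⬝ᵥ (b - B *ᵥ xo)) + p.2 * θo)
      = bendersG B x' xo θ' θo p := by
    simp [bendersF, bendersG, dotProduct, mulVec, Finset.sum_sub_distrib,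
      sub_mul, mul_sub, mul_add, Pi.sub_apply]
    ring_nf
  have h2 : -(p.1 ⬝ᵥ (b - B *ᵥ xo)) + p.2 * θo
      = bendersG B x' xo θ' θo p - bendersF b B x' θ' p := by linarith
  rw [bendersBeta, h2, sub_div, div_self hg]

/-- Proposition 4 of the paper: equivalence of the closest-cut and the
Conforti–Wolsey deepest-cut Benders selection problems. A point `(π*, π₀*)` of the
dual cone with `g(π*, π₀*) > 0` minimizes `β` over `{ g > 0 } ∩ Π` if and only if
its rescaling `(π*, π₀*)/g(π*, π₀*)` maximizes `f` over `{ g = 1 } ∩ Π`. -/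
theorem closest_cut_eq_deepest_cut {m n d : ℕ}
    (hm : 1 ≤ m) (hn : 1 ≤ n) (hd : 1 ≤ d)
    (A : Matrix (Fin m) (Fin n) ℝ) (b : Fin m → ℝ) (c : Fin n → ℝ)
    (B : Matrix (Fin m) (Fin d) ℝ)
    (x' xo : Fin d → ℝ) (θ' θo : ℝ)
    (ps : (Fin m → ℝ) × ℝ) (hps : ps ∈ bendersDualCone A c)
    (hgps : 0 < bendersG B x' xo θ' θo ps) :
    ((∀ p ∈ bendersDualCone A c, 0 < bendersG B x' xo θ' θo p →
        bendersBeta b B x' xo θ' θo ps ≤ bendersBeta b B x' xo θ' θo p) ↔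
      ((bendersG B x' xo θ' θo ps)⁻¹ • ps ∈ bendersDualCone A c ∧
        bendersG B x' xo θ' θo ((bendersG B x' xo θ' θo ps)⁻¹ • ps) = 1 ∧
        ∀ p ∈ bendersDualCone A c, bendersG B x' xo θ' θo p = 1 →
          bendersF b B x' θ' p ≤
            bendersF b B x' θ' ((bendersG B x' xo θ' θo ps)⁻¹ • ps))) := by
  set g := bendersG B x' xo θ' θo with hg
  have hgne : g ps ≠ 0 := ne_of_gt hgps
  have hinv : (0:ℝ) ≤ (g ps)⁻¹ := le_of_lt (inv_pos.mpr hgps)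
  have hmem : (g ps)⁻¹ • ps ∈ bendersDualCone A c := smul_mem_cone A c hinv hps
  have hg1 : g ((g ps)⁻¹ • ps) = 1 := by
    rw [hg, bendersG_smul]; exact inv_mul_cancel₀ hgne
  have hfq : bendersF b B x' θ' ((g ps)⁻¹ • ps) = bendersF b B x' θ' ps / g ps := by
    rw [bendersF_smul]; ring
  constructor
  · intro hmin
    refine ⟨hmem, hg1, fun p hp hgp1 => ?_⟩
    have hgp : 0 < g p := by rw [hgp1]; norm_num
    have := hmin p hp hgp
    rw [bendersBeta_eq b B x' xo θ' θo ps hgne,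
        bendersBeta_eq b B x' xo θ' θo p (ne_of_gt hgp), ← hg, hgp1, div_one] at this
    rw [hfq]
    linarith
  · rintro ⟨_, _, hmax⟩ p hp hgp
    have hq : (g p)⁻¹ • p ∈ bendersDualCone A c :=
      smul_mem_cone A c (le_of_lt (inv_pos.mpr hgp)) hp
    have hgq1 : g ((g p)⁻¹ • p) = 1 := by
      rw [hg, bendersG_smul]; exact inv_mul_cancel₀ (ne_of_gt hgp)
    have := hmax _ hq hgq1
    rw [hfq, bendersF_smul] at this
    rw [bendersBeta_eq b B x' xo θ' θo ps hgne,
        bendersBeta_eq b B x' xo θ' θo p (ne_of_gt hgp)]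
    rw [← hg]
    have h1 : (g p)⁻¹ * bendersF b B x' θ' p = bendersF b B x' θ' p / g p := by ring
    rw [h1] at this
    have hle : bendersF b B x' θ' p / g p ≤ bendersF b B x' θ' ps / g ps := this
    linarith
end

section
/- Equivalence with set covering (core of Proposition 1): the single-period on-route electrification program min { ∑_{j∈J} χ(j) : χ : J → {0,1}, η : R → ℕ, w : R × J → ℕ with w(r,j) = 0 whenever j ∉ J(r), satisfying ∑_{j∈J(r)} w(r,j) ≥ 1 for every r ∈ R, ∑_{r∈R, j∈J(r)} w(r,j) ≤ |R| · χ(j) for every j ∈ J, and ∑_{j∈J(r)} w(r,j) ≤ η(r) for every r ∈ R } is feasible and its optimal value equals the set covering optimum SCP(R, J, J(·)) := min { ∑_{j∈J} u(j) : u : J → {0,1}, and for every r ∈ R there exists j ∈ J(r) with u(j) = 1 }. -/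
open Finset

/-- The set of objective values `∑_j χ(j)` of feasible configurations of the
single-period on-route electrification program. -/
def onrouteValues {R J : Type*} [Fintype R] [Fintype J] [DecidableEq J]
    (Jr : R → Finset J) : Set ℕ :=
  {v | ∃ (χ : J → ℕ) (η : R → ℕ) (w : R → J → ℕ),
    (∀ j, χ j ≤ 1) ∧
    (∀ r j, j ∉ Jr r → w r j = 0) ∧
    (∀ r, 1 ≤ ∑ j ∈ Jr r, w r j) ∧
    (∀ j, ∑ r ∈ univ.filter (fun r => j ∈ Jr r), w r j ≤ Fintype.card R * χ j) ∧
    (∀ r, ∑ j ∈ Jr r, w r j ≤ η r) ∧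
    v = ∑ j, χ j}

/-- The set of objective values `∑_j u(j)` of feasible set covers. -/
def setCoverValues {R J : Type*} [Fintype R] [Fintype J]
    (Jr : R → Finset J) : Set ℕ :=
  {v | ∃ u : J → ℕ, (∀ j, u j ≤ 1) ∧ (∀ r, ∃ j ∈ Jr r, u j = 1) ∧ v = ∑ j, u j}

lemma onroute_eq_setcover_sets
    {R J : Type*} [Fintype R] [Fintype J] [DecidableEq J]
    [Nonempty R]
    (Jr : R → Finset J) (hJr : ∀ r, (Jr r).Nonempty) :
    onrouteValues Jr = setCoverValues Jr := by
  ext v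
  constructor
  · rintro ⟨χ, η, w, hχ, hw0, hcov, hcap, hη, hv⟩
    refine ⟨χ, hχ, ?_, hv⟩
    intro r
    obtain ⟨j, hj, hwj⟩ : ∃ j ∈ Jr r, 1 ≤ w r j := by
      by_contra h
      push_neg at h
      have : ∑ j ∈ Jr r, w r j = 0 := Finset.sum_eq_zero (fun j hj => by
        have := h j hj; omega)
      have := hcov r; omega
    refine ⟨j, hj, ?_⟩
    have h1 : 1 ≤ ∑ r' ∈ univ.filter (fun r' => j ∈ Jr r'), w r' j := by
      calc 1 ≤ w r j := hwj
        _ ≤ _ := Finset.single_le_sum (f := fun r' => w r' j)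
              (fun _ _ => Nat.zero_le _) (by simp [hj])
    have h2 := hcap j
    have h3 := hχ j
    have h4 : χ j ≠ 0 := by
      intro h0
      rw [h0, Nat.mul_zero] at h2
      omega
    omega
  · rintro ⟨u, hu, hcov, hv⟩
    choose f hf hfu using hcov
    refine ⟨u, fun _ => 1, fun r j => if j = f r then 1 else 0, hu, ?_, ?_, ?_, ?_, hv⟩
    · intro r j hj
      simp only [ite_eq_right_iff]
      intro h; exact absurd (h ▸ hf r) hj
    · intro r
      have : ∑ j ∈ Jr r, (if j = f r then 1 else 0) = 1 := by
        rw [Finset.sum_ite_eq' (Jr r) (f r) (fun _ => 1)]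
        simp [hf r]
      simpa using this.ge
    · intro j
      have hle : ∀ r' ∈ univ.filter (fun r' => j ∈ Jr r'),
          (if j = f r' then 1 else 0) ≤ u j := by
        intro r' _
        split
        · next h => rw [h, hfu r']
        · exact Nat.zero_le _
      calc ∑ r' ∈ univ.filter (fun r' => j ∈ Jr r'), (if j = f r' then 1 else 0)
          ≤ ∑ _r' ∈ univ.filter (fun r' => j ∈ Jr r'), u j := Finset.sum_le_sum hle
        _ = (univ.filter (fun r' => j ∈ Jr r')).card * u j := by
            rw [Finset.sum_const, smul_eq_mul]
        _ ≤ Fintype.card R * u j := by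
            exact Nat.mul_le_mul_right _ (le_trans (Finset.card_filter_le _ _)
              (le_of_eq (Finset.card_univ)))
    · intro r
      have : ∑ j ∈ Jr r, (if j = f r then 1 else 0) = 1 := by
        rw [Finset.sum_ite_eq' (Jr r) (f r) (fun _ => 1)]
        simp [hf r]
      simpa using this.le

/-- Core of Proposition 1: the single-period on-route electrification program is
feasible, and its optimal value equals the set covering optimum. -/
theorem onroute_eq_setcover
    {R J : Type*} [Fintype R] [Fintype J] [DecidableEq J]
    [Nonempty R] [Nonempty J]
    (Jr : R → Finset J) (hJr : ∀ r, (Jr r).Nonempty) :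
    (onrouteValues Jr).Nonempty ∧
      sInf (onrouteValues Jr) = sInf (setCoverValues Jr) := by
  have heq := onroute_eq_setcover_sets Jr hJr
  constructor
  · rw [heq]
    refine ⟨∑ j, (1 : ℕ), fun _ => 1, fun _ => le_refl 1, ?_, rfl⟩
    intro r
    obtain ⟨j, hj⟩ := hJr r
    exact ⟨j, hj, rfl⟩
  · rw [heq]
end

section
/- Lower bound in the uncovered case (first case in the proof of Proposition 2): if there exists a route r̂ ∈ R with χ(i) = 0 for every i ∈ J(r̂), then every feasible configuration of the single-depot-BEB covering model with this χ has objective value F ≥ |I| + 1. -/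
open Finset

/-- Feasibility of a configuration of the single-depot-BEB covering model, with
cyclic time horizon `T = |R| + 1`: demand at time `0`, flow conservation at the
full and empty battery states, charger capacity, and fleet size constraints. -/
def bebFeasible {R I : Type*} [Fintype R] [Fintype I]
    (χ : I → ℕ) (η : R → ℕ)
    (w v₀ v₁ : ZMod (Fintype.card R + 1) → R → ℕ)
    (z : ZMod (Fintype.card R + 1) → R → I → ℕ) : Prop :=
  (∀ r, 1 ≤ w 0 r) ∧
  (∀ t r, w t r + v₁ t r = (∑ i, z (t - 1) r i) + v₁ (t - 1) r) ∧
  (∀ t r, (∑ i, z t r i) + v₀ t r = w (t - 1) r + v₀ (t - 1) r) ∧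
  (∀ t i, ∑ r, z t r i ≤ χ i) ∧
  (∀ r, w 0 r + v₀ 0 r + v₁ 0 r + (∑ i, z 0 r i) ≤ η r)

/-- Objective value of a configuration of the single-depot-BEB covering model:
`F = ∑_i χ(i) + |I| · ∑_r ∑_{i ∉ J(r)} ∑_t z(t,r,i)`. -/
def bebObjective {R I : Type*} [Fintype R] [Fintype I] [DecidableEq I]
    (Jr : R → Finset I) (χ : I → ℕ)
    (z : ZMod (Fintype.card R + 1) → R → I → ℕ) : ℕ :=
  (∑ i, χ i) + Fintype.card I * ∑ r, ∑ i ∈ (Jr r)ᶜ, ∑ t, z t r i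

/-- First case in the proof of Proposition 2: if some route `r̂` has `χ(i) = 0` for
every depot `i ∈ J(r̂)` offering free charging, then every feasible configuration
with this `χ` has objective value at least `|I| + 1`. -/
theorem beb_uncovered_lower_bound
    {R I : Type*} [Fintype R] [Fintype I] [DecidableEq I]
    [Nonempty R] [Nonempty I]
    (Jr : R → Finset I) (hJr : ∀ r, (Jr r).Nonempty)
    (χ : I → ℕ) (hχ : ∀ i, χ i ≤ 1)
    (rhat : R) (hrhat : ∀ i ∈ Jr rhat, χ i = 0)
    (η : R → ℕ)
    (w v₀ v₁ : ZMod (Fintype.card R + 1) → R → ℕ)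
    (z : ZMod (Fintype.card R + 1) → R → I → ℕ)
    (hfeas : bebFeasible χ η w v₀ v₁ z) :
    Fintype.card I + 1 ≤ bebObjective Jr χ z := by
  obtain ⟨hdem, hfull, hempty, hcap, hfleet⟩ := hfeas
  -- sum full-state conservation over the cycle
  have hsum : (∑ t, w t rhat) + (∑ t, v₁ t rhat)
      = (∑ t, ∑ i, z t rhat i) + (∑ t, v₁ t rhat) := by
    rw [← Finset.sum_add_distrib, ← Finset.sum_add_distrib]
    exact Fintype.sum_equiv (Equiv.subRight (1 : ZMod (Fintype.card R + 1)))
      (fun t => w t rhat + v₁ t rhat) (fun t => (∑ i, z t rhat i) + v₁ t rhat)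
      (fun t => by simpa [Equiv.subRight] using hfull t rhat)
  have h1 : 1 ≤ ∑ t, w t rhat :=
    le_trans (hdem rhat)
      (Finset.single_le_sum (f := fun t => w t rhat) (fun _ _ => Nat.zero_le _)
        (Finset.mem_univ 0))
  have hz1 : 1 ≤ ∑ t, ∑ i, z t rhat i := by omega
  -- z vanishes on J(rhat)
  have hz0 : ∀ t, ∀ i ∈ Jr rhat, z t rhat i = 0 := by
    intro t i hi
    have h := hcap t i
    have h2 : z t rhat i ≤ ∑ r, z t r i := Finset.single_le_sum
      (f := fun r => z t r i) (fun _ _ => Nat.zero_le _) (Finset.mem_univ rhat)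
    have h3 := hrhat i hi
    omega
  have hsplit : 1 ≤ ∑ i ∈ (Jr rhat)ᶜ, ∑ t, z t rhat i := by
    have hc := Finset.sum_compl_add_sum (Jr rhat) (fun i => ∑ t, z t rhat i)
    have hJ0 : ∑ i ∈ Jr rhat, ∑ t, z t rhat i = 0 :=
      Finset.sum_eq_zero fun i hi => Finset.sum_eq_zero fun t _ => hz0 t i hi
    have hcomm : ∑ t, ∑ i, z t rhat i = ∑ i, ∑ t, z t rhat i := Finset.sum_comm
    omega
  -- find a depot with χ ≥ 1
  have hχ1 : 1 ≤ ∑ i, χ i := by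
    obtain ⟨i, hi, hipos⟩ : ∃ i ∈ (Jr rhat)ᶜ, 0 < ∑ t, z t rhat i := by
      by_contra h
      push_neg at h
      have : ∑ i ∈ (Jr rhat)ᶜ, ∑ t, z t rhat i = 0 :=
        Finset.sum_eq_zero fun i hi => Nat.le_zero.mp (h i hi)
      omega
    obtain ⟨t, _, htpos⟩ : ∃ t ∈ Finset.univ, 0 < z t rhat i := by
      by_contra h
      push_neg at h
      have : ∑ t, z t rhat i = 0 :=
        Finset.sum_eq_zero fun t ht => Nat.le_zero.mp (h t ht)
      omega
    have h := hcap t i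
    have h2 : z t rhat i ≤ ∑ r, z t r i := Finset.single_le_sum
      (f := fun r => z t r i) (fun _ _ => Nat.zero_le _) (Finset.mem_univ rhat)
    have h3 := Finset.single_le_sum (f := χ) (fun _ _ => Nat.zero_le _)
      (Finset.mem_univ i)
    omega
  have hpen : 1 ≤ ∑ r, ∑ i ∈ (Jr r)ᶜ, ∑ t, z t r i :=
    le_trans hsplit
      (Finset.single_le_sum (f := fun r => ∑ i ∈ (Jr r)ᶜ, ∑ t, z t r i)
        (fun _ _ => Nat.zero_le _) (Finset.mem_univ rhat))
  have : Fintype.card I * 1 ≤ Fintype.card I * ∑ r, ∑ i ∈ (Jr r)ᶜ, ∑ t, z t r i :=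
    Nat.mul_le_mul_left _ hpen
  unfold bebObjective
  omega
end

section
/- Feasible construction in the covered case (second case in the proof of Proposition 2): if for every r ∈ R there exists i ∈ J(r) with χ(i) = 1, then there exists a feasible configuration of the single-depot-BEB covering model with this χ such that η(r) = 1 for every r ∈ R and z(t,r,i) = 0 whenever i ∉ J(r); consequently its objective value is F = ∑_{i∈I} χ(i) ≤ |I|. -/
open Finset

/-- Second case in the proof of Proposition 2: if every route `r` has some depot
`i ∈ J(r)` with `χ(i) = 1`, then there is a feasible configuration with this `χ`
using one bus per route and only free charging trips; consequently its objective
value is `F = ∑_i χ(i) ≤ |I|`. -/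
theorem beb_covered_construction
    {R I : Type*} [Fintype R] [Fintype I] [DecidableEq I]
    [Nonempty R] [Nonempty I]
    (Jr : R → Finset I) (hJr : ∀ r, (Jr r).Nonempty)
    (χ : I → ℕ) (hχ : ∀ i, χ i ≤ 1)
    (hcov : ∀ r, ∃ i ∈ Jr r, χ i = 1) :
    ∃ (η : R → ℕ) (w v₀ v₁ : ZMod (Fintype.card R + 1) → R → ℕ)
      (z : ZMod (Fintype.card R + 1) → R → I → ℕ),
      bebFeasible χ η w v₀ v₁ z ∧
      (∀ r, η r = 1) ∧
      (∀ t r i, i ∉ Jr r → z t r i = 0) ∧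
      bebObjective Jr χ z = ∑ i, χ i ∧
      ∑ i, χ i ≤ Fintype.card I := by
  classical
  have hnpos : 1 ≤ Fintype.card R := Fintype.card_pos
  set n := Fintype.card R with hn
  let e := Fintype.equivFin R
  let s : R → ℕ := fun r => (e r).val + 1
  have hs1 : ∀ r, 1 ≤ s r := fun r => Nat.le_add_left 1 _
  have hsn : ∀ r, s r ≤ n := fun r => (e r).isLt
  have hsinj : Function.Injective s := fun a b h =>
    e.injective (Fin.val_injective (Nat.succ_injective h))
  choose ir hirJ hirχ using hcov
  have hvle : ∀ t : ZMod (n+1), t.val ≤ n := fun t =>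
    Nat.lt_succ_iff.mp (ZMod.val_lt t)
  have hval : ∀ t : ZMod (n+1), (t - 1).val = if t.val = 0 then n else t.val - 1 := by
    intro t
    have hneg : (t - 1 : ZMod (n+1)) = t + (n : ℕ) := by
      have h := ZMod.natCast_self (n+1)
      push_cast at h
      linear_combination -h
    rw [hneg, ZMod.val_add, ZMod.val_natCast]
    have hnn : n % (n+1) = n := Nat.mod_eq_of_lt (Nat.lt_succ_self n)
    rw [hnn]
    by_cases h0 : t.val = 0
    · simp [h0, hnn]
    · have h1 : 1 ≤ t.val := Nat.one_le_iff_ne_zero.mpr h0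
      have heq : t.val + n = (t.val - 1) + (n+1) := by omega
      rw [if_neg h0, heq, Nat.add_mod_right,
        Nat.mod_eq_of_lt (by have := hvle t; omega)]
  have hz0val : (0 : ZMod (n+1)).val = 0 := ZMod.val_zero
  refine ⟨fun _ => 1,
    fun t _ => if t.val = 0 then 1 else 0,
    fun t r => if 1 ≤ t.val ∧ t.val < s r then 1 else 0,
    fun t r => if s r < t.val then 1 else 0,
    fun t r i => if t.val = s r ∧ i = ir r then 1 else 0,
    ?_, fun _ => rfl, ?_, ?_, ?_⟩
  · have hzsum : ∀ (t : ZMod (n+1)) r,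
        (∑ i, if t.val = s r ∧ i = ir r then 1 else 0) = if t.val = s r then 1 else 0 := by
      intro t r
      by_cases hA : t.val = s r
      · simp [hA, Finset.sum_ite_eq']
      · simp [hA]
    refine ⟨?_, ?_, ?_, ?_, ?_⟩
    · intro r; simp [hz0val]
    · intro t r
      dsimp only
      rw [hzsum, hval]
      have := hs1 r; have := hsn r; have := hvle t; have h2 := hvle (t-1)
      split_ifs <;> omega
    · intro t r
      dsimp only
      rw [hzsum, hval]
      have := hs1 r; have := hsn r; have := hvle t
      split_ifs <;> omega
    · intro t i
      dsimp only
      by_cases hci : χ i = 0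
      · have hall : ∀ r ∈ Finset.univ, (if t.val = s r ∧ i = ir r then 1 else 0) = 0 := by
          intro r _
          rw [if_neg]
          rintro ⟨h1, h2⟩
          rw [h2, hirχ r] at hci
          exact one_ne_zero hci
        rw [Finset.sum_congr rfl hall, Finset.sum_const_zero]
        exact Nat.zero_le _
      · have hci1 : χ i = 1 := by have := hχ i; omega
        rw [hci1]
        by_cases hx : ∃ r0, t.val = s r0
        · obtain ⟨r0, hr0⟩ := hx
          calc (∑ r, if t.val = s r ∧ i = ir r then 1 else 0)
              ≤ ∑ r, (if r = r0 then 1 else 0) := by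
                apply Finset.sum_le_sum
                intro r _
                split_ifs with h1 h2 h2
                · exact le_refl 1
                · exact absurd (hsinj (hr0 ▸ h1.1.symm ▸ rfl : s r = s r0)) h2
                · exact Nat.zero_le 1
                · exact le_refl 0
            _ = 1 := by simp
        · have hall : ∀ r ∈ Finset.univ, (if t.val = s r ∧ i = ir r then 1 else 0) = 0 := by
            intro r _
            rw [if_neg]
            rintro ⟨h1, h2⟩
            exact hx ⟨r, h1⟩
          rw [Finset.sum_congr rfl hall, Finset.sum_const_zero]
          exact Nat.zero_le 1
    · intro r
      have h1 : (0 : ZMod (n+1)).val ≠ s r := by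
        rw [hz0val]; have := hs1 r; omega
      dsimp only
      rw [hzsum, if_neg h1, hz0val]
      simp
  · intro t r i hi
    dsimp only
    rw [if_neg]
    rintro ⟨h1, h2⟩
    exact hi (h2 ▸ hirJ r)
  · unfold bebObjective
    dsimp only
    have : ∀ r ∈ Finset.univ, (∑ i ∈ (Jr r)ᶜ, ∑ t : ZMod (n+1),
        (if t.val = s r ∧ i = ir r then 1 else 0)) = 0 := by
      intro r _
      apply Finset.sum_eq_zero
      intro i hi
      apply Finset.sum_eq_zero
      intro t _
      rw [if_neg]
      rintro ⟨h1, h2⟩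
      rw [Finset.mem_compl] at hi
      exact hi (h2 ▸ hirJ r)
    rw [Finset.sum_congr rfl this, Finset.sum_const_zero, Nat.mul_zero, Nat.add_zero]
  · calc (∑ i, χ i) ≤ ∑ _i : I, 1 := Finset.sum_le_sum (fun i _ => hχ i)
      _ = Fintype.card I := by simp
end

section
/- Equivalence with set covering (core of Proposition 2): the single-depot-BEB covering model is feasible, its objective F attains a minimum over all feasible configurations, and this minimum equals the set covering optimum SCP(R, I, J(·)) := min { ∑_{i∈I} u(i) : u : I → {0,1}, and for every r ∈ R there exists i ∈ J(r) with u(i) = 1 }. -/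
open Finset

/-- The set of objective values of feasible configurations of the single-depot-BEB
covering model. -/
def bebValues {R I : Type*} [Fintype R] [Fintype I] [DecidableEq I]
    (Jr : R → Finset I) : Set ℕ :=
  {v | ∃ (χ : I → ℕ) (η : R → ℕ)
      (w v₀ v₁ : ZMod (Fintype.card R + 1) → R → ℕ)
      (z : ZMod (Fintype.card R + 1) → R → I → ℕ),
    (∀ i, χ i ≤ 1) ∧ bebFeasible χ η w v₀ v₁ z ∧ v = bebObjective Jr χ z}

/-- The set of objective values `∑_i u(i)` of feasible set covers. -/
def bebSetCoverValues {R I : Type*} [Fintype R] [Fintype I]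
    (Jr : R → Finset I) : Set ℕ :=
  {v | ∃ u : I → ℕ, (∀ i, u i ≤ 1) ∧ (∀ r, ∃ i ∈ Jr r, u i = 1) ∧ v = ∑ i, u i}

/-! A set cover `u` gives a configuration with `χ = u` and no penalized trip: route `r` gets one
bus that serves at time `0` and recharges at a depot of `J(r)` opened by `u`, in a time slot
`1 + index(r) ≤ |R|` of its own, so no charger is ever used twice at once. Conversely, summing the
full-state balance over the cycle shows that every route needs a charging trip. Without penalized
trips these happen at depots of `J(r)` with `χ = 1`, so `χ` is a cover; a single penalized trip
already costs `|I|`, the value of the cover that opens every depot. -/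

lemma ZMod.val_sub_one {n : ℕ} (t : ZMod (n + 1)) :
    (t - 1).val = if t.val = 0 then n else t.val - 1 := by
  simp only [ZMod.val_eq_zero]
  exact Fin.coe_sub_one t

lemma sInf_eq_sInf_of_subset_of_forall_exists_le {S T : Set ℕ} (hST : S ⊆ T) (hS : S.Nonempty)
    (h : ∀ v ∈ T, ∃ s ∈ S, s ≤ v) : sInf T = sInf S := by
  refine le_antisymm (Nat.sInf_le (hST (Nat.sInf_mem hS))) ?_
  obtain ⟨s, hs, hle⟩ := h _ (Nat.sInf_mem (hS.mono hST))
  exact (Nat.sInf_le hs).trans hle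

lemma eq_zero_of_forall_add_eq_comp_sub {G : Type*} [AddGroup G] [Fintype G] {a b : G → ℕ}
    (g : G) (h : ∀ t, a t + b t = b (t - g)) (t : G) : a t = 0 := by
  have hsum : ∑ t, a t + ∑ t, b t = ∑ t, b t := by
    rw [← sum_add_distrib, sum_congr rfl fun t _ => h t]
    exact (Equiv.subRight g).sum_comp b
  exact sum_eq_zero_iff.mp (by omega) t (mem_univ t)

-- State indicators of a single bus that serves its route at time `0` and charges at time `k`.
namespace OneBus

variable {n : ℕ}

def serving (t : ZMod (n + 1)) : ℕ := if t.val = 0 then 1 else 0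

def emptyIdle (k : ℕ) (t : ZMod (n + 1)) : ℕ := if 0 < t.val ∧ t.val < k then 1 else 0

def charging (k : ℕ) (t : ZMod (n + 1)) : ℕ := if t.val = k then 1 else 0

def fullIdle (k : ℕ) (t : ZMod (n + 1)) : ℕ := if k < t.val then 1 else 0

variable {k : ℕ}

lemma serving_add_fullIdle (hk : 0 < k) (hkn : k ≤ n) (t : ZMod (n + 1)) :
    serving t + fullIdle k t = charging k (t - 1) + fullIdle k (t - 1) := by
  have := t.val_lt
  simp only [serving, fullIdle, charging, ZMod.val_sub_one]
  split_ifs <;> omega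

lemma charging_add_emptyIdle (hk : 0 < k) (hkn : k ≤ n) (t : ZMod (n + 1)) :
    charging k t + emptyIdle k t = serving (t - 1) + emptyIdle k (t - 1) := by
  have := t.val_lt
  simp only [serving, emptyIdle, charging, ZMod.val_sub_one]
  split_ifs <;> omega

lemma sum_ite_charging_le {R I : Type*} [Fintype R] [DecidableEq I]
    {τ : R → ℕ} (hτ : τ.Injective) {u : I → ℕ} {depot : R → I} (hdepot : ∀ r, u (depot r) = 1)
    (t : ZMod (n + 1)) (i : I) :
    ∑ r, (if i = depot r then charging (τ r) t else 0) ≤ u i := by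
  by_cases hi : ∃ r, depot r = i
  · obtain ⟨r, rfl⟩ := hi
    calc ∑ s, (if depot r = depot s then charging (τ s) t else 0)
        ≤ ∑ s, charging (τ s) t := sum_le_sum fun s _ => by split_ifs <;> simp
      _ = #{s | t.val = τ s} := by simp [charging]
      _ ≤ u (depot r) := by
        rw [hdepot, card_le_one]
        intro a ha b hb
        simp only [mem_filter, mem_univ, true_and] at ha hb
        exact hτ (ha.symm.trans hb)
  · rw [sum_eq_zero fun r _ => if_neg fun h => hi ⟨r, h.symm⟩]
    exact Nat.zero_le _

end OneBus

section Covering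

variable {R I : Type*} [Fintype R] [Fintype I] {χ : I → ℕ} {η : R → ℕ}
  {w v₀ v₁ : ZMod (Fintype.card R + 1) → R → ℕ} {z : ZMod (Fintype.card R + 1) → R → I → ℕ}

lemma card_mem_bebSetCoverValues {Jr : R → Finset I} (hJr : ∀ r, (Jr r).Nonempty) :
    Fintype.card I ∈ bebSetCoverValues Jr :=
  ⟨fun _ => 1, fun _ => le_rfl, fun r => ⟨(hJr r).choose, (hJr r).choose_spec, rfl⟩, by simp⟩

lemma bebFeasible.exists_charging (hf : bebFeasible χ η w v₀ v₁ z) (r : R) :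
    ∃ t i, z t r i ≠ 0 := by
  obtain ⟨hdemand, hfull, -⟩ := hf
  by_contra! hz
  have hbal (t : ZMod (Fintype.card R + 1)) : w t r + v₁ t r = v₁ (t - 1) r := by
    simpa [hz] using hfull t r
  exact absurd (eq_zero_of_forall_add_eq_comp_sub 1 hbal 0) (Nat.one_le_iff_ne_zero.mp (hdemand r))

variable [DecidableEq I]

def bebPenalty (Jr : R → Finset I) (z : ZMod (Fintype.card R + 1) → R → I → ℕ) : ℕ :=
  ∑ r, ∑ i ∈ (Jr r)ᶜ, ∑ t, z t r i

lemma bebObjective_eq (Jr : R → Finset I) :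
    bebObjective Jr χ z = ∑ i, χ i + Fintype.card I * bebPenalty Jr z := rfl

lemma bebPenalty_eq_zero_iff {Jr : R → Finset I} :
    bebPenalty Jr z = 0 ↔ ∀ t r, ∀ i ∉ Jr r, z t r i = 0 := by
  simp only [bebPenalty, sum_eq_zero_iff, mem_univ, mem_compl, true_implies]
  exact ⟨fun h t r i hi => h r i hi t, fun h r i hi t => h t r i hi⟩

open OneBus in
lemma exists_bebFeasible_of_cover (Jr : R → Finset I) {u : I → ℕ}
    (hcov : ∀ r, ∃ i ∈ Jr r, u i = 1) :
    ∃ (η : R → ℕ) (w v₀ v₁ : ZMod (Fintype.card R + 1) → R → ℕ)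
      (z : ZMod (Fintype.card R + 1) → R → I → ℕ),
      bebFeasible u η w v₀ v₁ z ∧ bebPenalty Jr z = 0 := by
  choose depot hdepot_mem hdepot using hcov
  let τ : R → ℕ := fun r => (Fintype.equivFin R r).val + 1
  have hτ_inj : τ.Injective := fun r s h =>
    (Fintype.equivFin R).injective (Fin.ext (Nat.succ_injective h))
  have hτ_pos (r : R) : 0 < τ r := Nat.succ_pos _
  have hτ_le (r : R) : τ r ≤ Fintype.card R := (Fintype.equivFin R r).isLt
  have hz (t : ZMod (Fintype.card R + 1)) (r : R) :
      ∑ i, (if i = depot r then charging (τ r) t else 0) = charging (τ r) t := by simp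
  refine ⟨fun _ => 1, fun t _ => serving t, fun t r => emptyIdle (τ r) t,
    fun t r => fullIdle (τ r) t, fun t r i => if i = depot r then charging (τ r) t else 0,
    ⟨?demand, ?full, ?empty, ?capacity, ?fleet⟩, ?penalty⟩
  case demand => simp [serving]
  case full =>
    intro t r
    simp only [hz]
    exact serving_add_fullIdle (hτ_pos r) (hτ_le r) t
  case empty =>
    intro t r
    simp only [hz]
    exact charging_add_emptyIdle (hτ_pos r) (hτ_le r) t
  case capacity => exact sum_ite_charging_le hτ_inj hdepot
  case fleet =>
    intro r
    simp [serving, emptyIdle, fullIdle, charging]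
  case penalty =>
    rw [bebPenalty_eq_zero_iff]
    rintro t r i hi
    rw [if_neg]
    rintro rfl
    exact hi (hdepot_mem r)

lemma bebSetCoverValues_subset_bebValues (Jr : R → Finset I) :
    bebSetCoverValues Jr ⊆ bebValues Jr := by
  rintro v ⟨u, hu, hcov, rfl⟩
  obtain ⟨η, w, v₀, v₁, z, hfeas, hpen⟩ := exists_bebFeasible_of_cover Jr hcov
  exact ⟨u, η, w, v₀, v₁, z, hu, hfeas, by rw [bebObjective_eq, hpen, mul_zero, add_zero]⟩

lemma bebFeasible.covers_of_bebPenalty_eq_zero {Jr : R → Finset I}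
    (hf : bebFeasible χ η w v₀ v₁ z) (hχ : ∀ i, χ i ≤ 1) (hpen : bebPenalty Jr z = 0) (r : R) :
    ∃ i ∈ Jr r, χ i = 1 := by
  obtain ⟨t, i, hti⟩ := hf.exists_charging r
  have hi : i ∈ Jr r := by
    by_contra hi
    exact hti (bebPenalty_eq_zero_iff.mp hpen t r i hi)
  obtain ⟨-, -, -, hcapacity, -⟩ := hf
  have hle : z t r i ≤ χ i :=
    (single_le_sum (fun s _ => Nat.zero_le (z t s i)) (mem_univ r)).trans (hcapacity t i)
  exact ⟨i, hi, le_antisymm (hχ i) (by omega)⟩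

lemma exists_le_of_mem_bebValues {Jr : R → Finset I} (hJr : ∀ r, (Jr r).Nonempty) {v : ℕ}
    (hv : v ∈ bebValues Jr) : ∃ s ∈ bebSetCoverValues Jr, s ≤ v := by
  obtain ⟨χ, η, w, v₀, v₁, z, hχ, hf, rfl⟩ := hv
  rw [bebObjective_eq]
  rcases Nat.eq_zero_or_pos (bebPenalty Jr z) with hpen | hpen
  · refine ⟨∑ i, χ i, ⟨χ, hχ, hf.covers_of_bebPenalty_eq_zero hχ hpen, rfl⟩, ?_⟩
    simp [hpen]
  · refine ⟨_, card_mem_bebSetCoverValues hJr, ?_⟩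
    exact (Nat.le_mul_of_pos_right _ hpen).trans (Nat.le_add_left _ _)

end Covering

theorem beb_eq_setcover_general
    {R I : Type*} [Fintype R] [Fintype I] [DecidableEq I]
    (Jr : R → Finset I) (hJr : ∀ r, (Jr r).Nonempty) :
    (bebValues Jr).Nonempty ∧
      sInf (bebValues Jr) ∈ bebValues Jr ∧
      sInf (bebValues Jr) = sInf (bebSetCoverValues Jr) := by
  have hsub := bebSetCoverValues_subset_bebValues Jr
  have hcover : (bebSetCoverValues Jr).Nonempty := ⟨_, card_mem_bebSetCoverValues hJr⟩
  have hne : (bebValues Jr).Nonempty := hcover.mono hsub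
  exact ⟨hne, Nat.sInf_mem hne, sInf_eq_sInf_of_subset_of_forall_exists_le hsub hcover
    fun _ hv => exists_le_of_mem_bebValues hJr hv⟩

/-- Core of Proposition 2: the single-depot-BEB covering model is feasible, its
objective attains a minimum over all feasible configurations, and this minimum
equals the set covering optimum. -/
theorem beb_eq_setcover
    {R I : Type*} [Fintype R] [Fintype I] [DecidableEq I]
    [Nonempty R] [Nonempty I]
    (Jr : R → Finset I) (hJr : ∀ r, (Jr r).Nonempty) :
    (bebValues Jr).Nonempty ∧
      sInf (bebValues Jr) ∈ bebValues Jr ∧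
      sInf (bebValues Jr) = sInf (bebSetCoverValues Jr) :=
  beb_eq_setcover_general Jr hJr
end

section
/- Energy-balance identity for cyclic state-of-charge circulations: every circulation of the cyclic state-of-charge flow model satisfies ∑_{t∈ℤ/Tℤ} ∑_{s=1}^{s_b} w(t,s) = ∑_{t∈ℤ/Tℤ} ∑_{c∈C} ∑_{s=0}^{s_b−1} (s_b − s) · z(t,c,s); that is, the total flow on service arcs over one cycle equals the total number of units of charge regained through charging operations over one cycle. -/
open Finset

lemma cyclic_soc_aux_sum (n : ℕ) (f : ℕ → ℕ) :
    ∑ s ∈ Finset.Icc 1 n, ∑ k ∈ Finset.range s, f k =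
      ∑ k ∈ Finset.range n, (n - k) * f k := by
  induction n with
  | zero => simp
  | succ n ih =>
    rw [Finset.sum_Icc_succ_top (by omega : 1 ≤ n + 1), ih,
        Finset.sum_range_succ, Finset.sum_range_succ]
    have hcong : ∀ k ∈ Finset.range n, (n + 1 - k) * f k = (n - k) * f k + f k := by
      intro k hk
      have hk' := Finset.mem_range.mp hk
      have h : n + 1 - k = (n - k) + 1 := by omega
      rw [h, add_mul, one_mul]
    rw [Finset.sum_congr rfl hcong, Finset.sum_add_distrib]
    have h1 : n + 1 - n = 1 := by omega
    rw [h1, one_mul]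
    omega

/-- Energy-balance identity for cyclic state-of-charge circulations: in the cyclic
flow model with time horizon `T`, battery capacity `s_b ≥ 1`, charging options `C`
with durations `κ(c,s) ≥ 1`, any circulation (given by service flows `w`, idling
flows `v`, and charging flows `z` satisfying flow conservation at every node)
satisfies `∑_t ∑_{s=1}^{s_b} w(t,s) = ∑_t ∑_c ∑_{s=0}^{s_b−1} (s_b − s)·z(t,c,s)`:
the total service flow over one cycle equals the total charge regained over one
cycle. -/
theorem cyclic_soc_energy_balance
    {T : ℕ} [NeZero T] {C : Type*} [Fintype C]
    (sb : ℕ) (hsb : 1 ≤ sb)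
    (κ : C → ℕ → ℕ) (hκ : ∀ c s, s ≤ sb - 1 → 1 ≤ κ c s)
    (w v : ZMod T → ℕ → ℕ) (z : ZMod T → C → ℕ → ℕ)
    (hfull : ∀ t : ZMod T,
      w t sb + v t sb =
        (∑ c, ∑ s ∈ Finset.range sb, z (t - (κ c s : ZMod T)) c s) + v (t - 1) sb)
    (hmid : ∀ t : ZMod T, ∀ s, 1 ≤ s → s ≤ sb - 1 →
      w t s + v t s + ∑ c, z t c s = w (t - 1) (s + 1) + v (t - 1) s)
    (hempty : ∀ t : ZMod T,
      (∑ c, z t c 0) + v t 0 = w (t - 1) 1 + v (t - 1) 0) :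
    ∑ t : ZMod T, ∑ s ∈ Finset.Icc 1 sb, w t s =
      ∑ t : ZMod T, ∑ c, ∑ s ∈ Finset.range sb, (sb - s) * z t c s := by
  classical
  set W : ℕ → ℕ := fun s => ∑ t : ZMod T, w t s with hW
  set Z : ℕ → ℕ := fun s => ∑ t : ZMod T, ∑ c, z t c s with hZ
  have shift : ∀ (a : ZMod T) (f : ZMod T → ℕ),
      ∑ t : ZMod T, f (t - a) = ∑ t : ZMod T, f t :=
    fun a f => Fintype.sum_equiv (Equiv.subRight a) _ _ (fun t => rfl)
  have base : W 1 = Z 0 := by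
    have hsum : (∑ t : ZMod T, ∑ c, z t c 0) + ∑ t : ZMod T, v t 0
        = (∑ t : ZMod T, w t 1) + ∑ t : ZMod T, v t 0 := by
      rw [← Finset.sum_add_distrib, ← Finset.sum_add_distrib,
        show (∑ t : ZMod T, (w t 1 + v t 0))
            = ∑ t : ZMod T, (w (t - 1) 1 + v (t - 1) 0) from
          (shift 1 (fun t => w t 1 + v t 0)).symm]
      exact Finset.sum_congr rfl fun t _ => hempty t
    simp only [hW, hZ]
    omega
  have step : ∀ s, 1 ≤ s → s ≤ sb - 1 → W (s + 1) = W s + Z s := by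
    intro s h1 h2
    have hsum : (∑ t : ZMod T, w t s) + (∑ t : ZMod T, v t s)
          + (∑ t : ZMod T, ∑ c, z t c s)
        = (∑ t : ZMod T, w t (s + 1)) + ∑ t : ZMod T, v t s := by
      rw [← Finset.sum_add_distrib, ← Finset.sum_add_distrib, ← Finset.sum_add_distrib,
        show (∑ t : ZMod T, (w t (s + 1) + v t s))
            = ∑ t : ZMod T, (w (t - 1) (s + 1) + v (t - 1) s) from
          (shift 1 (fun t => w t (s + 1) + v t s)).symm]
      exact Finset.sum_congr rfl fun t _ => hmid t s h1 h2
    simp only [hW, hZ]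
    omega
  have key : ∀ s, 1 ≤ s → s ≤ sb → W s = ∑ k ∈ Finset.range s, Z k := by
    intro s
    induction s with
    | zero => omega
    | succ n ih =>
      intro _ hle
      rcases Nat.eq_zero_or_pos n with hn | hn
      · subst hn; simpa using base
      · rw [Finset.sum_range_succ, ← ih hn (by omega), step n hn (by omega)]
  calc ∑ t : ZMod T, ∑ s ∈ Finset.Icc 1 sb, w t s
      = ∑ s ∈ Finset.Icc 1 sb, W s := Finset.sum_comm
    _ = ∑ s ∈ Finset.Icc 1 sb, ∑ k ∈ Finset.range s, Z k := by
        refine Finset.sum_congr rfl fun s hs => ?_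
        obtain ⟨h1, h2⟩ := Finset.mem_Icc.mp hs
        exact key s h1 h2
    _ = ∑ k ∈ Finset.range sb, (sb - k) * Z k := cyclic_soc_aux_sum sb Z
    _ = ∑ t : ZMod T, ∑ c, ∑ s ∈ Finset.range sb, (sb - s) * z t c s := by
        simp only [hZ, Finset.mul_sum]
        rw [Finset.sum_comm]
        exact Finset.sum_congr rfl fun t _ => Finset.sum_comm
end
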